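/- arXiv:1511.00026 — 3 statements merged into one kernel-verified Lean document; each statement's English description precedes it below -/
import Mathlib

section
/- Let S:[0,T]→ℝ^d be continuous. For i,j∈{1,…,d} and constants K_ij∈ℝ with K_ij=K_ji, define ξ^{ij}:[0,T]→ℝ^d as follows: if i≠j, the i-th and j-th components of ξ^{ij}(t) both equal 2(S_i(t)+S_j(t)−K_ij) and all other components are 0; if i=j, the i-th component of ξ^{ii}(t) equals 2(S_i(t)−K_ii) and all other components are 0. Then the limits lim_{n→∞} Σ_{s∈𝕋_n, s≤t} ξ^{ij}(s)·(S(s')−S(s)) exist in ℝ for all t∈[0,T] and all i,j if and only if the covariations ⟨S_i,S_j⟩(t) exist in ℝ for all t∈[0,T] and all i,j. In this case, lim_{n→∞} Σ_{s∈𝕋_n, s≤t} ξ^{ii}(s)·(S(s')−S(s)) = (S_i(t)−K_ii)² − (S_i(0)−K_ii)² − ⟨S_i,S_i⟩(t), and for i≠j, lim_{n→∞} Σ_{s∈𝕋_n, s≤t} ξ^{ij}(s)·(S(s')−S(s)) = (S_i(t)+S_j(t)−K_ij)² − (S_i(0)+S_j(0)−K_ij)² − Σ_{k,ℓ∈{i,j}}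 ⟨S_k,S_ℓ⟩(t). -/
open Finset Filter Topology Set

noncomputable section

/-- The successor `s'` of `s` in the partition `P` of `[0,T]` (equal to `T` if there is none). -/
def succOf (T : ℝ) (P : Finset ℝ) (s : ℝ) : ℝ :=
  if h : (P.filter (fun u => s < u)).Nonempty then (P.filter (fun u => s < u)).min' h else T

/-- A refining sequence of partitions of `[0,T]` whose meshes tend to zero. -/
structure PartitionSeq (T : ℝ) where
  part : ℕ → Finset ℝ
  subset_Icc : ∀ n, ↑(part n) ⊆ Set.Icc (0 : ℝ) T
  zero_mem : ∀ n, (0 : ℝ) ∈ part n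
  top_mem : ∀ n, T ∈ part n
  refining : ∀ n, part n ⊆ part (n + 1)
  mesh_to_zero : ∀ ε > 0, ∃ N, ∀ n ≥ N, ∀ s ∈ part n, succOf T (part n) s - s < ε
/-- Approximating sums for the covariation `⟨S_i,S_j⟩(t)` along the `n`-th partition. -/
def covSum (T : ℝ) (𝕋 : PartitionSeq T) {d : ℕ} (S : ℝ → Fin d → ℝ) (i j : Fin d)
    (t : ℝ) (n : ℕ) : ℝ :=
  ∑ s ∈ (𝕋.part n).filter (fun s => s ≤ t),
    (S (succOf T (𝕋.part n) s) i - S s i) * (S (succOf T (𝕋.part n) s) j - S s j)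

/-- The Föllmer integral `∫_r^t ξ(s)·dS(s)` exists along `(𝕋_n)` with value `I`. -/
def HasFollmerIntegral (T : ℝ) (𝕋 : PartitionSeq T) {d : ℕ} (ξ S : ℝ → Fin d → ℝ)
    (r t I : ℝ) : Prop :=
  Tendsto (fun n => ∑ s ∈ (𝕋.part n).filter (fun s => r ≤ s ∧ s ≤ t),
    ∑ k, ξ s k * (S (succOf T (𝕋.part n) s) k - S s k)) atTop (𝓝 I)

/-- The open positive orthant `ℝ_+^d`. -/
def posOrth (d : ℕ) : Set (Fin d → ℝ) := {x | ∀ i, 0 < x i}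

/-- The class `𝒮_a`: continuous trajectories whose covariations are `∫_0^t a_ij(s,S(s)) ds`. -/
def SclassA (T : ℝ) (𝕋 : PartitionSeq T) {d : ℕ}
    (a : ℝ → (Fin d → ℝ) → Fin d → Fin d → ℝ) : Set (ℝ → Fin d → ℝ) :=
  {S | ContinuousOn S (Set.Icc 0 T) ∧
    ∀ i j : Fin d, ∀ t ∈ Set.Icc (0 : ℝ) T,
      Tendsto (fun n => covSum T 𝕋 S i j t n) atTop (𝓝 (∫ s in (0 : ℝ)..t, a s (S s) i j))}

/-- The class `𝒮_a^+`: positive continuous trajectories whose covariations are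
`∫_0^t a_ij(s,S(s)) S_i(s) S_j(s) ds`. -/
def SclassAPos (T : ℝ) (𝕋 : PartitionSeq T) {d : ℕ}
    (a : ℝ → (Fin d → ℝ) → Fin d → Fin d → ℝ) : Set (ℝ → Fin d → ℝ) :=
  {S | ContinuousOn S (Set.Icc 0 T) ∧ (∀ t ∈ Set.Icc (0 : ℝ) T, ∀ i, 0 < S t i) ∧
    ∀ i j : Fin d, ∀ t ∈ Set.Icc (0 : ℝ) T,
      Tendsto (fun n => covSum T 𝕋 S i j t n) atTop
        (𝓝 (∫ s in (0 : ℝ)..t, a s (S s) i j * S s i * S s j))}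

/-- First partial derivative in the `i`-th space direction. -/
def pd1 {d : ℕ} (f : (Fin d → ℝ) → ℝ) (i : Fin d) (x : Fin d → ℝ) : ℝ :=
  fderiv ℝ f x (Pi.single i 1)

/-- Second partial derivative in the space directions `i, j`. -/
def pd2 {d : ℕ} (f : (Fin d → ℝ) → ℝ) (i j : Fin d) (x : Fin d → ℝ) : ℝ :=
  fderiv ℝ (fun y => pd1 f j y) x (Pi.single i 1)

/-- Time derivative (within the time interval `I`). -/
def tderiv {d : ℕ} (I : Set ℝ) (v : ℝ → (Fin d → ℝ) → ℝ) (t : ℝ) (x : Fin d → ℝ) : ℝ :=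
  derivWithin (fun τ => v τ x) I t

/-- `v` is of class `C^{1,2}(I × D)`: continuous on `I × D`, continuously differentiable in
`(t,x)` and twice continuously differentiable in `x` on `(int I) × D`, with all derivatives
admitting continuous extensions to `I × D`. -/
structure IsC12 {d : ℕ} (I : Set ℝ) (D : Set (Fin d → ℝ)) (v : ℝ → (Fin d → ℝ) → ℝ) : Prop where
  cont : ContinuousOn (fun p : ℝ × (Fin d → ℝ) => v p.1 p.2) (I ×ˢ D)
  diff : ∀ t ∈ interior I, ∀ x ∈ D,
    DifferentiableAt ℝ (fun p : ℝ × (Fin d → ℝ) => v p.1 p.2) (t, x)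
  diff2 : ∀ t ∈ interior I, ∀ x ∈ D, ∀ j : Fin d, DifferentiableAt ℝ (pd1 (v t) j) x
  derivs_extend : ∃ (gt : ℝ × (Fin d → ℝ) → ℝ) (gx : Fin d → ℝ × (Fin d → ℝ) → ℝ)
      (gxx : Fin d → Fin d → ℝ × (Fin d → ℝ) → ℝ),
    ContinuousOn gt (I ×ˢ D) ∧ (∀ i, ContinuousOn (gx i) (I ×ˢ D)) ∧
    (∀ i j, ContinuousOn (gxx i j) (I ×ˢ D)) ∧
    ∀ t ∈ interior I, ∀ x ∈ D,
      gt (t, x) = deriv (fun τ => v τ x) t ∧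
      (∀ i, gx i (t, x) = pd1 (v t) i x) ∧
      ∀ i j, gxx i j (t, x) = pd2 (v t) i j x

lemma succOf_spec {T s p : ℝ} {P : Finset ℝ} (hp : p ∈ P) (hsp : s < p) :
    succOf T P s ∈ P ∧ s < succOf T P s ∧ succOf T P s ≤ p := by
  have hne : (P.filter (fun u => s < u)).Nonempty := ⟨p, Finset.mem_filter.2 ⟨hp, hsp⟩⟩
  rw [succOf, dif_pos hne]
  have h1 := Finset.min'_mem _ hne
  rw [Finset.mem_filter] at h1
  exact ⟨h1.1, h1.2, Finset.min'_le _ _ (Finset.mem_filter.2 ⟨hp, hsp⟩)⟩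

def lastLe (t : ℝ) (P : Finset ℝ) : ℝ :=
  if h : (P.filter (fun s => s ≤ t)).Nonempty then (P.filter (fun s => s ≤ t)).max' h else 0

lemma lastLe_spec {t : ℝ} {P : Finset ℝ} (h0 : (0:ℝ) ∈ P) (ht : 0 ≤ t) :
    lastLe t P ∈ P ∧ lastLe t P ≤ t ∧ ∀ p ∈ P, p ≤ t → p ≤ lastLe t P := by
  have hne : (P.filter (fun s => s ≤ t)).Nonempty := ⟨0, Finset.mem_filter.2 ⟨h0, ht⟩⟩
  simp only [lastLe, dif_pos hne]
  have h1 := Finset.max'_mem _ hne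
  rw [Finset.mem_filter] at h1
  refine ⟨h1.1, h1.2, fun p hp hpt => ?_⟩
  have : p ∈ P.filter (fun s => s ≤ t) := Finset.mem_filter.2 ⟨hp, hpt⟩
  exact Finset.le_max' _ p this

lemma telescope {T t : ℝ} {P : Finset ℝ} (hP : ↑P ⊆ Set.Icc (0:ℝ) T)
    (h0 : (0:ℝ) ∈ P) (ht0 : 0 ≤ t) (g : ℝ → ℝ) :
    ∑ s ∈ P.filter (fun s => s ≤ t), (g (succOf T P s) - g s)
      = g (succOf T P (lastLe t P)) - g 0 := by
  obtain ⟨hMP, hMt, hMmax⟩ := lastLe_spec h0 ht0 (P := P)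
  set F := P.filter (fun s => s ≤ t) with hF
  set M := lastLe t P with hM
  have h0F : (0:ℝ) ∈ F := Finset.mem_filter.2 ⟨h0, ht0⟩
  have hMF : M ∈ F := Finset.mem_filter.2 ⟨hMP, hMt⟩
  have hpos : ∀ p ∈ P, 0 ≤ p := fun p hp => (hP hp).1
  have hlt : ∀ a ∈ F.erase M, a < M := by
    intro a ha
    rw [Finset.mem_erase, hF, Finset.mem_filter] at ha
    exact lt_of_le_of_ne (hMmax a ha.2.1 ha.2.2) ha.1
  have hmem' : ∀ a ∈ F.erase M, a ∈ P ∧ a ≤ t := by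
    intro a ha
    rw [Finset.mem_erase, hF, Finset.mem_filter] at ha
    exact ha.2
  have key : ∑ s ∈ F.erase M, g (succOf T P s) = ∑ u ∈ F.erase 0, g u := by
    apply Finset.sum_bij (i := fun s _ => succOf T P s)
    · intro a ha
      obtain ⟨h1, h2, h3⟩ := succOf_spec hMP (hlt a ha)
      refine Finset.mem_erase.2 ⟨?_, Finset.mem_filter.2 ⟨h1, h3.trans hMt⟩⟩
      exact ne_of_gt (lt_of_le_of_lt (hpos a (hmem' a ha).1) h2)
    · intro a ha b hb hab
      have mono : ∀ x ∈ F.erase M, ∀ y ∈ F.erase M, x < y → succOf T P x < succOf T P y := by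
        intro x hx y hy hxy
        have h1 : succOf T P x ≤ y := (succOf_spec (hmem' y hy).1 hxy).2.2
        exact lt_of_le_of_lt h1 (succOf_spec hMP (hlt y hy)).2.1
      rcases lt_trichotomy a b with h | h | h
      · exact absurd hab (ne_of_lt (mono a ha b hb h))
      · exact h
      · exact absurd hab.symm (ne_of_lt (mono b hb a ha h))
    · intro u hu
      rw [Finset.mem_erase, hF, Finset.mem_filter] at hu
      have hu0 : 0 < u := lt_of_le_of_ne (hpos u hu.2.1) (Ne.symm hu.1)
      have hQne : ((P.filter (fun p => p < u))).Nonempty := ⟨0, Finset.mem_filter.2 ⟨h0, hu0⟩⟩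
      obtain ⟨a, haP, hau, hamax⟩ : ∃ a, a ∈ P ∧ a < u ∧ ∀ q ∈ P, q < u → q ≤ a := by
        have hmm := Finset.max'_mem _ hQne
        rw [Finset.mem_filter] at hmm
        refine ⟨(P.filter (fun p => p < u)).max' hQne, hmm.1, hmm.2, fun q hq hqu => ?_⟩
        have : q ∈ P.filter (fun p => p < u) := Finset.mem_filter.2 ⟨hq, hqu⟩
        exact Finset.le_max' _ q this
      obtain ⟨h1, h2, h3⟩ := succOf_spec hu.2.1 hau
      have hσ : succOf T P a = u :=
        le_antisymm h3 (not_lt.1 fun hlt' => absurd (hamax _ h1 hlt') (not_le.2 h2))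
      refine ⟨a, ?_, hσ⟩
      refine Finset.mem_erase.2 ⟨?_, Finset.mem_filter.2 ⟨haP, le_of_lt (lt_of_lt_of_le hau hu.2.2)⟩⟩
      exact ne_of_lt (lt_of_lt_of_le hau (hMmax u hu.2.1 hu.2.2))
    · intro a ha; rfl
  rw [Finset.sum_sub_distrib, ← Finset.add_sum_erase F (fun s => g (succOf T P s)) hMF,
      ← Finset.add_sum_erase F g h0F, key]
  ring

lemma sigma_bounds {T t : ℝ} {P : Finset ℝ} (hP : ↑P ⊆ Set.Icc (0:ℝ) T)
    (h0 : (0:ℝ) ∈ P) (ht : t ∈ Set.Icc (0:ℝ) T) :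
    t ≤ succOf T P (lastLe t P) ∧ succOf T P (lastLe t P) ∈ Set.Icc (0:ℝ) T := by
  obtain ⟨hMP, hMt, hMmax⟩ := lastLe_spec h0 ht.1
  by_cases h : (P.filter (fun u => lastLe t P < u)).Nonempty
  · rw [succOf, dif_pos h]
    have hmem := Finset.min'_mem _ h
    rw [Finset.mem_filter] at hmem
    refine ⟨?_, hP hmem.1⟩
    by_contra hlt
    push_neg at hlt
    exact absurd (hMmax _ hmem.1 hlt.le) (not_le.2 hmem.2)
  · rw [succOf, dif_neg h]
    exact ⟨ht.2, Set.right_mem_Icc.2 (le_trans ht.1 ht.2)⟩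

lemma sigma_tendsto {T : ℝ} (𝕋 : PartitionSeq T) {t : ℝ} (ht : t ∈ Set.Icc (0:ℝ) T)
    {g : ℝ → ℝ} (hg : ContinuousOn g (Set.Icc 0 T)) :
    Tendsto (fun n => g (succOf T (𝕋.part n) (lastLe t (𝕋.part n)))) atTop (𝓝 (g t)) := by
  have htt : Tendsto (fun n => succOf T (𝕋.part n) (lastLe t (𝕋.part n))) atTop
      (𝓝[Set.Icc (0:ℝ) T] t) := by
    rw [tendsto_nhdsWithin_iff]
    constructor
    · rw [Metric.tendsto_atTop]
      intro ε hε
      obtain ⟨N, hN⟩ := 𝕋.mesh_to_zero ε hε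
      refine ⟨N, fun n hn => ?_⟩
      obtain ⟨hMP, hMt, _⟩ := lastLe_spec (𝕋.zero_mem n) ht.1
      have h1 := hN n hn _ hMP
      have h2 := (sigma_bounds (𝕋.subset_Icc n) (𝕋.zero_mem n) ht).1
      rw [Real.dist_eq, abs_of_nonneg (sub_nonneg.2 h2)]
      linarith
    · exact Filter.Eventually.of_forall fun n =>
        (sigma_bounds (𝕋.subset_Icc n) (𝕋.zero_mem n) ht).2
  exact Tendsto.comp (hg t ht) htt

/-- Proposition 2.1: existence of the Föllmer integrals of the quadratic strategies `ξ^{ij}`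
is equivalent to the existence of all covariations, together with the explicit formulas. -/
theorem stmt0 (T : ℝ) (hT : 0 < T) (𝕋 : PartitionSeq T) (d : ℕ)
    (S : ℝ → Fin d → ℝ) (hS : ContinuousOn S (Set.Icc 0 T))
    (K : Fin d → Fin d → ℝ) (hK : ∀ i j, K i j = K j i)
    (ξ : Fin d → Fin d → ℝ → Fin d → ℝ)
    (hξ : ∀ i j : Fin d, ∀ t : ℝ, ∀ k : Fin d,
      ξ i j t k = if i ≠ j ∧ (k = i ∨ k = j) then 2 * (S t i + S t j - K i j)
        else if i = j ∧ k = i then 2 * (S t i - K i i) else 0) :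
    ((∀ t ∈ Set.Icc (0 : ℝ) T, ∀ i j : Fin d, ∃ L : ℝ,
        Tendsto (fun n => ∑ s ∈ (𝕋.part n).filter (fun s => s ≤ t),
          ∑ k, ξ i j s k * (S (succOf T (𝕋.part n) s) k - S s k)) atTop (𝓝 L)) ↔
      (∀ t ∈ Set.Icc (0 : ℝ) T, ∀ i j : Fin d, ∃ c : ℝ,
        Tendsto (fun n => covSum T 𝕋 S i j t n) atTop (𝓝 c))) ∧
    (∀ cov : Fin d → Fin d → ℝ → ℝ,
      (∀ i j : Fin d, ∀ t ∈ Set.Icc (0 : ℝ) T,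
        Tendsto (fun n => covSum T 𝕋 S i j t n) atTop (𝓝 (cov i j t))) →
      (∀ i : Fin d, ∀ t ∈ Set.Icc (0 : ℝ) T,
        Tendsto (fun n => ∑ s ∈ (𝕋.part n).filter (fun s => s ≤ t),
          ∑ k, ξ i i s k * (S (succOf T (𝕋.part n) s) k - S s k)) atTop
          (𝓝 ((S t i - K i i) ^ 2 - (S 0 i - K i i) ^ 2 - cov i i t))) ∧
      (∀ i j : Fin d, i ≠ j → ∀ t ∈ Set.Icc (0 : ℝ) T,
        Tendsto (fun n => ∑ s ∈ (𝕋.part n).filter (fun s => s ≤ t),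
          ∑ k, ξ i j s k * (S (succOf T (𝕋.part n) s) k - S s k)) atTop
          (𝓝 ((S t i + S t j - K i j) ^ 2 - (S 0 i + S 0 j - K i j) ^ 2 -
            (cov i i t + cov i j t + cov j i t + cov j j t))))) := by
  have hsymm : ∀ (i j : Fin d) (t : ℝ) (n : ℕ),
      covSum T 𝕋 S i j t n = covSum T 𝕋 S j i t n := by
    intro i j t n
    unfold covSum
    exact Finset.sum_congr rfl fun s _ => mul_comm _ _
  have hSc : ∀ i : Fin d, ContinuousOn (fun u => S u i) (Set.Icc (0:ℝ) T) :=
    fun i => (continuous_apply i).comp_continuousOn hS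
  have key_diag : ∀ (i : Fin d) (t : ℝ), 0 ≤ t → ∀ n : ℕ,
      ∑ s ∈ (𝕋.part n).filter (fun s => s ≤ t),
        ∑ k, ξ i i s k * (S (succOf T (𝕋.part n) s) k - S s k)
      = ((S (succOf T (𝕋.part n) (lastLe t (𝕋.part n))) i - K i i) ^ 2
          - (S 0 i - K i i) ^ 2) - covSum T 𝕋 S i i t n := by
    intro i t ht0 n
    have hinner : ∀ s : ℝ,
        (∑ k, ξ i i s k * (S (succOf T (𝕋.part n) s) k - S s k))
        = ((fun u => (S u i - K i i) ^ 2) (succOf T (𝕋.part n) s)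
            - (fun u => (S u i - K i i) ^ 2) s)
          - (S (succOf T (𝕋.part n) s) i - S s i) * (S (succOf T (𝕋.part n) s) i - S s i) := by
      intro s
      rw [Finset.sum_eq_single i]
      · rw [hξ]
        simp only [ne_eq, not_true_eq_false, false_and, if_false, and_self, if_true]
        ring
      · intro k _ hk
        rw [hξ]
        simp [hk]
      · intro h; exact absurd (Finset.mem_univ i) h
    have e1 : ∑ s ∈ (𝕋.part n).filter (fun s => s ≤ t),
        ∑ k, ξ i i s k * (S (succOf T (𝕋.part n) s) k - S s k)
        = ∑ s ∈ (𝕋.part n).filter (fun s => s ≤ t),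
          (((fun u => (S u i - K i i) ^ 2) (succOf T (𝕋.part n) s)
              - (fun u => (S u i - K i i) ^ 2) s)
            - (S (succOf T (𝕋.part n) s) i - S s i) * (S (succOf T (𝕋.part n) s) i - S s i)) :=
      Finset.sum_congr rfl fun s _ => hinner s
    rw [e1, Finset.sum_sub_distrib,
      telescope (𝕋.subset_Icc n) (𝕋.zero_mem n) ht0 (fun u => (S u i - K i i) ^ 2)]
    rfl
  have key_off : ∀ (i j : Fin d), i ≠ j → ∀ (t : ℝ), 0 ≤ t → ∀ n : ℕ,
      ∑ s ∈ (𝕋.part n).filter (fun s => s ≤ t),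
        ∑ k, ξ i j s k * (S (succOf T (𝕋.part n) s) k - S s k)
      = ((S (succOf T (𝕋.part n) (lastLe t (𝕋.part n))) i
            + S (succOf T (𝕋.part n) (lastLe t (𝕋.part n))) j - K i j) ^ 2
          - (S 0 i + S 0 j - K i j) ^ 2)
        - (covSum T 𝕋 S i i t n + covSum T 𝕋 S i j t n
            + covSum T 𝕋 S j i t n + covSum T 𝕋 S j j t n) := by
    intro i j hij t ht0 n
    have hinner : ∀ s : ℝ,
        (∑ k, ξ i j s k * (S (succOf T (𝕋.part n) s) k - S s k))
        = ((fun u => (S u i + S u j - K i j) ^ 2) (succOf T (𝕋.part n) s)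
            - (fun u => (S u i + S u j - K i j) ^ 2) s)
          - ((S (succOf T (𝕋.part n) s) i - S s i) * (S (succOf T (𝕋.part n) s) i - S s i)
            + (S (succOf T (𝕋.part n) s) i - S s i) * (S (succOf T (𝕋.part n) s) j - S s j)
            + (S (succOf T (𝕋.part n) s) j - S s j) * (S (succOf T (𝕋.part n) s) i - S s i)
            + (S (succOf T (𝕋.part n) s) j - S s j) * (S (succOf T (𝕋.part n) s) j - S s j)) := by
      intro s
      have hz : ∀ k ∈ (Finset.univ : Finset (Fin d)), k ∉ ({i, j} : Finset (Fin d)) →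
          ξ i j s k * (S (succOf T (𝕋.part n) s) k - S s k) = 0 := by
        intro k _ hk
        simp only [Finset.mem_insert, Finset.mem_singleton, not_or] at hk
        rw [hξ]
        simp [hk.1, hk.2, hij]
      rw [← Finset.sum_subset (Finset.subset_univ ({i, j} : Finset (Fin d))) hz,
        Finset.sum_pair hij, hξ, hξ]
      simp only [ne_eq, hij, not_false_eq_true, true_and, or_true, true_or, if_true]
      ring
    have e1 : ∑ s ∈ (𝕋.part n).filter (fun s => s ≤ t),
        ∑ k, ξ i j s k * (S (succOf T (𝕋.part n) s) k - S s k)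
        = ∑ s ∈ (𝕋.part n).filter (fun s => s ≤ t),
          (((fun u => (S u i + S u j - K i j) ^ 2) (succOf T (𝕋.part n) s)
              - (fun u => (S u i + S u j - K i j) ^ 2) s)
            - ((S (succOf T (𝕋.part n) s) i - S s i) * (S (succOf T (𝕋.part n) s) i - S s i)
              + (S (succOf T (𝕋.part n) s) i - S s i) * (S (succOf T (𝕋.part n) s) j - S s j)
              + (S (succOf T (𝕋.part n) s) j - S s j) * (S (succOf T (𝕋.part n) s) i - S s i)
              + (S (succOf T (𝕋.part n) s) j - S s j) * (S (succOf T (𝕋.part n) s) j - S s j))) :=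
      Finset.sum_congr rfl fun s _ => hinner s
    rw [e1, Finset.sum_sub_distrib,
      telescope (𝕋.subset_Icc n) (𝕋.zero_mem n) ht0 (fun u => (S u i + S u j - K i j) ^ 2),
      Finset.sum_add_distrib, Finset.sum_add_distrib, Finset.sum_add_distrib]
    rfl
  have teleD : ∀ (i : Fin d) (t : ℝ), t ∈ Set.Icc (0:ℝ) T →
      Tendsto (fun n => (S (succOf T (𝕋.part n) (lastLe t (𝕋.part n))) i - K i i) ^ 2)
        atTop (𝓝 ((S t i - K i i) ^ 2)) := by
    intro i t ht
    exact sigma_tendsto 𝕋 ht (((hSc i).sub continuousOn_const).pow 2)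
  have teleO : ∀ (i j : Fin d) (t : ℝ), t ∈ Set.Icc (0:ℝ) T →
      Tendsto (fun n => (S (succOf T (𝕋.part n) (lastLe t (𝕋.part n))) i
          + S (succOf T (𝕋.part n) (lastLe t (𝕋.part n))) j - K i j) ^ 2)
        atTop (𝓝 ((S t i + S t j - K i j) ^ 2)) := by
    intro i j t ht
    exact sigma_tendsto 𝕋 ht ((((hSc i).add (hSc j)).sub continuousOn_const).pow 2)
  have covdiag : (∀ t ∈ Set.Icc (0 : ℝ) T, ∀ i j : Fin d, ∃ L : ℝ,
        Tendsto (fun n => ∑ s ∈ (𝕋.part n).filter (fun s => s ≤ t),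
          ∑ k, ξ i j s k * (S (succOf T (𝕋.part n) s) k - S s k)) atTop (𝓝 L)) →
      ∀ t ∈ Set.Icc (0:ℝ) T, ∀ i : Fin d, ∃ c : ℝ,
        Tendsto (fun n => covSum T 𝕋 S i i t n) atTop (𝓝 c) := by
    intro H t ht i
    obtain ⟨L, hL⟩ := H t ht i i
    refine ⟨((S t i - K i i) ^ 2 - (S 0 i - K i i) ^ 2) - L, ?_⟩
    have h1 := ((teleD i t ht).sub_const ((S 0 i - K i i) ^ 2)).sub hL
    exact h1.congr (fun n => by rw [key_diag i t ht.1 n]; ring)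
  constructor
  · constructor
    · intro H t ht i j
      by_cases hij : i = j
      · subst hij
        exact covdiag H t ht i
      · obtain ⟨ci, hci⟩ := covdiag H t ht i
        obtain ⟨cj, hcj⟩ := covdiag H t ht j
        obtain ⟨L, hL⟩ := H t ht i j
        refine ⟨(1/2) * ((((S t i + S t j - K i j) ^ 2 - (S 0 i + S 0 j - K i j) ^ 2) - L
          - ci) - cj), ?_⟩
        have h2 := ((((teleO i j t ht).sub_const ((S 0 i + S 0 j - K i j) ^ 2)).sub hL).sub
          hci).sub hcj
        have h3 := h2.const_mul (1/2 : ℝ)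
        exact h3.congr (fun n => by
          rw [key_off i j hij t ht.1 n, hsymm j i t n]; ring)
    · intro H t ht i j
      by_cases hij : i = j
      · subst hij
        obtain ⟨c, hc⟩ := H t ht i i
        refine ⟨((S t i - K i i) ^ 2 - (S 0 i - K i i) ^ 2) - c, ?_⟩
        exact Tendsto.congr (fun n => (key_diag i t ht.1 n).symm)
          (((teleD i t ht).sub_const ((S 0 i - K i i) ^ 2)).sub hc)
      · obtain ⟨cii, hcii⟩ := H t ht i i
        obtain ⟨cij, hcij⟩ := H t ht i j
        obtain ⟨cji, hcji⟩ := H t ht j i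
        obtain ⟨cjj, hcjj⟩ := H t ht j j
        refine ⟨((S t i + S t j - K i j) ^ 2 - (S 0 i + S 0 j - K i j) ^ 2)
          - (cii + cij + cji + cjj), ?_⟩
        have hsum := ((hcii.add hcij).add hcji).add hcjj
        exact Tendsto.congr (fun n => (key_off i j hij t ht.1 n).symm)
          (((teleO i j t ht).sub_const ((S 0 i + S 0 j - K i j) ^ 2)).sub hsum)
  · intro cov hcov
    constructor
    · intro i t ht
      exact Tendsto.congr (fun n => (key_diag i t ht.1 n).symm)
        (((teleD i t ht).sub_const ((S 0 i - K i i) ^ 2)).sub (hcov i i t ht))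
    · intro i j hij t ht
      have hsum := (((hcov i i t ht).add (hcov i j t ht)).add (hcov j i t ht)).add
        (hcov j j t ht)
      exact Tendsto.congr (fun n => (key_off i j hij t ht.1 n).symm)
        (((teleO i j t ht).sub_const ((S 0 i + S 0 j - K i j) ^ 2)).sub hsum)
end
end

section
/- Let S:[0,T]→ℝ be continuous and suppose its quadratic variation along (𝕋_n) exists and satisfies ⟨S,S⟩(t)=0 for all t∈[0,T]. Then for every t∈[0,T] the limit lim_{n→∞} Σ_{s∈𝕋_n, s≤t} 2(S(s)−S(0))·(S(s')−S(s)) exists and equals (S(t)−S(0))². Consequently, the self-financing strategy holding ξ(t)=2(S(t)−S(0)) shares of the asset, started from zero initial capital, has portfolio value V(t)=(S(t)−S(0))² at every time t, which is nonnegative and strictly positive at some time whenever S is not constant. -/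
open Finset Filter Topology Set

noncomputable section

lemma succOf_eq_of (T : ℝ) (P : Finset ℝ) (a m : ℝ) (hm : m ∈ P) (ham : a < m)
    (hmin : ∀ x ∈ P, a < x → m ≤ x) : succOf T P a = m := by
  have hmem : m ∈ P.filter (fun u => a < u) := Finset.mem_filter.mpr ⟨hm, ham⟩
  have hne : (P.filter (fun u => a < u)).Nonempty := ⟨m, hmem⟩
  rw [succOf, dif_pos hne]
  refine le_antisymm (Finset.min'_le _ _ hmem) ?_
  have h := Finset.min'_mem _ hne
  rw [Finset.mem_filter] at h
  exact hmin _ h.1 h.2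

lemma telescope_s2 (T : ℝ) (P : Finset ℝ) (f : ℝ → ℝ) :
    ∀ (Q : Finset ℝ) (hne : Q.Nonempty), Q ⊆ P →
      (∀ x ∈ P, ∀ y ∈ Q, x ≤ y → x ∈ Q) →
      ∑ s ∈ Q, (f (succOf T P s) - f s)
        = f (succOf T P (Q.max' hne)) - f (Q.min' hne) := by
  intro Q
  induction Q using Finset.strongInduction with
  | _ Q ih =>
    intro hne hQP hinit
    by_cases hcard : Q.card = 1
    · obtain ⟨a, rfl⟩ := Finset.card_eq_one.mp hcard
      simp
    · have h2 : 1 < Q.card := lt_of_le_of_ne (Finset.one_le_card.mpr hne) (Ne.symm hcard)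
      set m := Q.max' hne with hmdef
      have hmQ : m ∈ Q := Q.max'_mem hne
      obtain ⟨b, hbQ, hbm⟩ := Finset.exists_mem_ne h2 m
      have hbm' : b < m := lt_of_le_of_ne (Q.le_max' b hbQ) hbm
      set Q' := Q.erase m with hQ'def
      have hne' : Q'.Nonempty := ⟨b, Finset.mem_erase.mpr ⟨hbm, hbQ⟩⟩
      have hQ'Q : Q' ⊆ Q := Finset.erase_subset _ _
      have hlt : ∀ y ∈ Q', y < m := by
        intro y hy
        rw [Finset.mem_erase] at hy
        exact lt_of_le_of_ne (Q.le_max' y hy.2) hy.1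
      have hinit' : ∀ x ∈ P, ∀ y ∈ Q', x ≤ y → x ∈ Q' := by
        intro x hx y hy hxy
        have hxQ : x ∈ Q := hinit x hx y (hQ'Q hy) hxy
        exact Finset.mem_erase.mpr ⟨ne_of_lt (lt_of_le_of_lt hxy (hlt y hy)), hxQ⟩
      -- min' equality
      have hminQ' : Q.min' hne ∈ Q' := by
        refine Finset.mem_erase.mpr ⟨?_, Q.min'_mem hne⟩
        exact ne_of_lt (lt_of_le_of_lt (Q.min'_le b hbQ) hbm')
      have hmin_eq : Q'.min' hne' = Q.min' hne :=
        le_antisymm (Q'.min'_le _ hminQ') (Q.min'_le _ (hQ'Q (Q'.min'_mem hne')))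
      -- succOf of max of Q' equals m
      set m₂ := Q'.max' hne' with hm2def
      have hm2Q' : m₂ ∈ Q' := Q'.max'_mem hne'
      have hm2m : m₂ < m := hlt _ hm2Q'
      have hsucc : succOf T P m₂ = m := by
        apply succOf_eq_of T P m₂ m (hQP hmQ) hm2m
        intro x hx hm2x
        by_contra hxm
        push_neg at hxm
        have hxQ : x ∈ Q := hinit x hx m hmQ hxm.le
        have hxQ' : x ∈ Q' := Finset.mem_erase.mpr ⟨ne_of_lt hxm, hxQ⟩
        exact absurd (Q'.le_max' x hxQ') (not_le.mpr hm2x)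
      have hsplit : ∑ s ∈ Q', (f (succOf T P s) - f s) + (f (succOf T P m) - f m)
          = ∑ s ∈ Q, (f (succOf T P s) - f s) :=
        Finset.sum_erase_add Q _ hmQ
      rw [← hsplit, ih Q' (Finset.erase_ssubset hmQ) hne' (hQ'Q.trans hQP) hinit',
        hsucc, hmin_eq]
      ring

/-- If the quadratic variation of `S` exists and vanishes identically, then the strategy
`ξ(t) = 2(S(t)-S(0))` has existing Föllmer integral with portfolio value `(S(t)-S(0))²`;
this value is nonnegative and strictly positive at some time whenever `S` is not constant. -/
theorem stmt2 (T : ℝ) (hT : 0 < T) (𝕋 : PartitionSeq T)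
    (S : ℝ → ℝ) (hS : ContinuousOn S (Set.Icc 0 T))
    (hQV : ∀ t ∈ Set.Icc (0 : ℝ) T,
      Tendsto (fun n => ∑ s ∈ (𝕋.part n).filter (fun s => s ≤ t),
        (S (succOf T (𝕋.part n) s) - S s) ^ 2) atTop (𝓝 0)) :
    (∀ t ∈ Set.Icc (0 : ℝ) T,
      Tendsto (fun n => ∑ s ∈ (𝕋.part n).filter (fun s => s ≤ t),
        2 * (S s - S 0) * (S (succOf T (𝕋.part n) s) - S s)) atTop
        (𝓝 ((S t - S 0) ^ 2))) ∧
    (∀ t ∈ Set.Icc (0 : ℝ) T, 0 ≤ (S t - S 0) ^ 2) ∧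
    ((∃ u ∈ Set.Icc (0 : ℝ) T, ∃ w ∈ Set.Icc (0 : ℝ) T, S u ≠ S w) →
      ∃ t ∈ Set.Icc (0 : ℝ) T, 0 < (S t - S 0) ^ 2) := by
  refine ⟨?_, fun t _ => sq_nonneg _, ?_⟩
  · intro t ht
    set P := 𝕋.part with hPdef
    set Q : ℕ → Finset ℝ := fun n => (P n).filter (fun s => s ≤ t) with hQdef
    have hQne : ∀ n, (Q n).Nonempty := fun n =>
      ⟨0, Finset.mem_filter.mpr ⟨𝕋.zero_mem n, ht.1⟩⟩
    have hQsub : ∀ n, Q n ⊆ P n := fun n => Finset.filter_subset _ _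
    have hinit : ∀ n, ∀ x ∈ P n, ∀ y ∈ Q n, x ≤ y → x ∈ Q n := by
      intro n x hx y hy hxy
      rw [Finset.mem_filter] at hy ⊢
      exact ⟨hx, hxy.trans hy.2⟩
    have hmin0 : ∀ n, (Q n).min' (hQne n) = 0 := by
      intro n
      refine le_antisymm ((Q n).min'_le 0 (Finset.mem_filter.mpr ⟨𝕋.zero_mem n, ht.1⟩)) ?_
      exact (𝕋.subset_Icc n ((hQsub n) ((Q n).min'_mem (hQne n)))).1
    set σ : ℕ → ℝ := fun n => succOf T (P n) ((Q n).max' (hQne n)) with hσdef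
    have hmax_le : ∀ n, (Q n).max' (hQne n) ≤ t := fun n =>
      (Finset.mem_filter.mp ((Q n).max'_mem (hQne n))).2
    -- σ n ≥ t and σ n ∈ Icc 0 T
    have hσprop : ∀ n, t ≤ σ n ∧ σ n ∈ Set.Icc (0:ℝ) T := by
      intro n
      set m := (Q n).max' (hQne n)
      by_cases h : ((P n).filter (fun u => m < u)).Nonempty
      · have hσ : σ n = ((P n).filter (fun u => m < u)).min' h := by
          rw [hσdef]; exact dif_pos h
        have hmem := Finset.min'_mem _ h
        rw [Finset.mem_filter] at hmem
        constructor
        · by_contra hlt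
          push_neg at hlt
          have hσQ : σ n ∈ Q n := Finset.mem_filter.mpr ⟨hσ ▸ hmem.1, hlt.le⟩
          have h1 : σ n ≤ m := (Q n).le_max' _ hσQ
          have h2 : m < σ n := by rw [hσ]; exact hmem.2
          linarith
        · exact 𝕋.subset_Icc n (hσ ▸ hmem.1)
      · have hσ : σ n = T := by rw [hσdef]; exact dif_neg h
        rw [hσ]
        refine ⟨ht.2, le_refl 0 |>.trans hT.le, le_refl T⟩
    -- mesh bound: σ n - max ≤ mesh
    have hσt : Tendsto σ atTop (𝓝 t) := by
      rw [Metric.tendsto_atTop]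
      intro ε hε
      obtain ⟨N, hN⟩ := 𝕋.mesh_to_zero ε hε
      refine ⟨N, fun n hn => ?_⟩
      have hmesh := hN n hn ((Q n).max' (hQne n)) ((hQsub n) ((Q n).max'_mem (hQne n)))
      have h1 : t ≤ σ n := (hσprop n).1
      have h2 : σ n - t < ε := by
        have := hmax_le n
        simp only [hσdef] at hmesh ⊢
        linarith
      rw [Real.dist_eq, abs_of_nonneg (by linarith)]
      exact h2
    have hσIcc : ∀ n, σ n ∈ Set.Icc (0:ℝ) T := fun n => (hσprop n).2
    have hSσ : Tendsto (fun n => S (σ n)) atTop (𝓝 (S t)) := by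
      have h1 : Tendsto σ atTop (𝓝[Set.Icc (0:ℝ) T] t) :=
        tendsto_nhdsWithin_of_tendsto_nhds_of_eventually_within σ hσt
          (Eventually.of_forall hσIcc)
      exact (hS t ht).tendsto.comp h1
    have hg : Tendsto (fun n => (S (σ n) - S 0) ^ 2) atTop (𝓝 ((S t - S 0) ^ 2)) :=
      (hSσ.sub tendsto_const_nhds).pow 2
    have hkey : ∀ n, ∑ s ∈ Q n, 2 * (S s - S 0) * (S (succOf T (P n) s) - S s)
        = (S (σ n) - S 0) ^ 2
          - ∑ s ∈ Q n, (S (succOf T (P n) s) - S s) ^ 2 := by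
      intro n
      have htel := telescope_s2 T (P n) (fun x => (S x - S 0) ^ 2) (Q n) (hQne n)
        (hQsub n) (hinit n)
      rw [hmin0 n] at htel
      have : ∑ s ∈ Q n, 2 * (S s - S 0) * (S (succOf T (P n) s) - S s)
          = ∑ s ∈ Q n, (((S (succOf T (P n) s) - S 0) ^ 2 - (S s - S 0) ^ 2)
              - (S (succOf T (P n) s) - S s) ^ 2) := by
        apply Finset.sum_congr rfl
        intro s _
        ring
      rw [this, Finset.sum_sub_distrib, htel]
      simp [hσdef]
    have := hg.sub (hQV t ht)
    rw [sub_zero] at this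
    refine this.congr ?_
    intro n
    exact (hkey n).symm
  · rintro ⟨u, hu, w, hw, huw⟩
    have h0 : (0:ℝ) ∈ Set.Icc (0:ℝ) T := ⟨le_refl 0, hT.le⟩
    by_cases h : S u = S 0
    · refine ⟨w, hw, ?_⟩
      have : S w ≠ S 0 := fun hw0 => huw (h.trans hw0.symm)
      exact pow_two_pos_of_ne_zero (sub_ne_zero.mpr this)
    · exact ⟨u, hu, pow_two_pos_of_ne_zero (sub_ne_zero.mpr h)⟩
end
end

section
/- Let f:ℝ^d→ℝ be continuous and let v ∈ C^{1,2}([0,T)×ℝ^d)∩C([0,T]×ℝ^d) solve ∂v/∂t + ℒv = 0 on [0,T)×ℝ^d with v(T,x)=f(x). Then for every S∈𝒮_a and every t∈[0,T): the Föllmer integral ∫_0^t ∇_x v(s,S(s))·dS(s) exists as the limit of Riemann sums along (𝕋_n), and v(t,S(t)) = v(0,S(0)) + ∫_0^t ∇_x v(s,S(s))·dS(s); moreover lim_{t↑T} v(t,S(t)) = f(S(T)). In particular, the self-financing strategy ξ^S(t):=∇_x v(t,S(t)), η^S(t):=v(t,S(t))−ξ^S(t)·S(t) perfectly replicates the payoff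 f(S(T)) for every S∈𝒮_a. The analogous statement holds on ℝ_+^d with ℒ^+ and 𝒮_a^+. -/
open Finset Filter Topology Set

noncomputable section

/-! Pathwise Itô formula. Along the `n`-th partition, `v(s', S s') - v(s, S s)` splits into a time
increment, the first-order term `∇ₓv(s, S s)·ΔS`, the second-order term `½ ∑ ∂ᵢⱼv(s, S s) ΔSᵢΔSⱼ`,
and a Taylor remainder. The time increments sum to `∫₀ᵗ ∂ₜv(u, S u) du`. The covariation hypothesis
says that the distribution functions of the weights `ΔSᵢΔSⱼ` converge; after polarization these
weights are nonnegative, so integrands continuous in time may be approximated by step functions,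
and the second-order sums converge to `½ ∫₀ᵗ ∑ aᵢⱼ ∂ᵢⱼv du`. The remainder is uniformly `o(|ΔS|²)`,
and the quadratic variation stays bounded. The PDE cancels the two limits, so the Föllmer sums
converge to `v(t, S t) - v(0, S 0)`. Both `ℝᵈ` and `ℝ₊ᵈ` are convex, which keeps the segments used
in Taylor's formula inside the domain. -/

open MeasureTheory

section Partition

variable {T : ℝ} {P : Finset ℝ} {s t u : ℝ}

lemma succOf_le (hP : ↑P ⊆ Icc 0 T) (s : ℝ) : succOf T P s ≤ T := by
  unfold succOf
  split_ifs with h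
  · exact (hP (mem_filter.1 ((P.filter (s < ·)).min'_mem h)).1).2
  · exact le_rfl

lemma le_succOf (hP : ↑P ⊆ Icc 0 T) (hs : s ∈ P) : s ≤ succOf T P s := by
  unfold succOf
  split_ifs with h
  · exact (mem_filter.1 ((P.filter (s < ·)).min'_mem h)).2.le
  · exact (hP hs).2

lemma succOf_eq_min' (h : (P.filter (s < ·)).Nonempty) :
    succOf T P s = (P.filter (s < ·)).min' h :=
  dif_pos h

lemma succOf_mem_and_lt (hu : u ∈ P) (hsu : s < u) : succOf T P s ∈ P ∧ s < succOf T P s := by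
  have h : (P.filter (s < ·)).Nonempty := ⟨u, mem_filter.2 ⟨hu, hsu⟩⟩
  rw [succOf_eq_min' h]
  exact mem_filter.1 ((P.filter (s < ·)).min'_mem h)

lemma succOf_le_of_lt (hu : u ∈ P) (hsu : s < u) : succOf T P s ≤ u := by
  rw [succOf_eq_min' ⟨u, mem_filter.2 ⟨hu, hsu⟩⟩]
  exact min'_le _ _ (mem_filter.2 ⟨hu, hsu⟩)

lemma succOf_eq_of_forall_lt (hst : s ≤ t) (h : ∀ u ∈ P, s < u → t < u) :
    succOf T P s = succOf T P t := by
  have hfilter : P.filter (s < ·) = P.filter (t < ·) :=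
    filter_congr fun u hu => ⟨h u hu, hst.trans_lt⟩
  unfold succOf
  rw [hfilter]

lemma exists_succOf_eq (h0 : (0 : ℝ) ∈ P) (hu : u ∈ P) (hu0 : 0 < u) :
    ∃ p ∈ P, p < u ∧ succOf T P p = u := by
  have hne : (P.filter (· < u)).Nonempty := ⟨0, mem_filter.2 ⟨h0, hu0⟩⟩
  obtain ⟨hpP, hpu⟩ := mem_filter.1 ((P.filter (· < u)).max'_mem hne)
  set p := (P.filter (· < u)).max' hne
  refine ⟨p, hpP, hpu, (succOf_le_of_lt hu hpu).antisymm (not_lt.1 fun hlt => ?_)⟩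
  obtain ⟨hmem, hgt⟩ := succOf_mem_and_lt (T := T) hu hpu
  exact (le_max' _ _ (mem_filter.2 ⟨hmem, hlt⟩)).not_gt hgt

lemma succOf_lt_succOf (hTP : T ∈ P) (ht : t ∈ P) (htT : t < T) (hst : s < t) :
    succOf T P s < succOf T P t :=
  (succOf_le_of_lt ht hst).trans_lt (succOf_mem_and_lt hTP htT).2

lemma succOf_mono (hP : ↑P ⊆ Icc 0 T) (hst : s ≤ t) : succOf T P s ≤ succOf T P t := by
  by_cases h : (P.filter (t < ·)).Nonempty
  · obtain ⟨hmem, hlt⟩ := mem_filter.1 ((P.filter (t < ·)).min'_mem h)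
    rw [succOf_eq_min' h]
    exact succOf_le_of_lt hmem (hst.trans_lt hlt)
  · have hT : succOf T P t = T := dif_neg h
    rw [hT]
    exact succOf_le hP s

lemma exists_mem_le_succOf_eq (h0 : (0 : ℝ) ∈ P) (ht : 0 ≤ t) :
    ∃ m ∈ P, m ≤ t ∧ succOf T P m = succOf T P t := by
  have hne : (P.filter (· ≤ t)).Nonempty := ⟨0, mem_filter.2 ⟨h0, ht⟩⟩
  obtain ⟨hmP, hmt⟩ := mem_filter.1 ((P.filter (· ≤ t)).max'_mem hne)
  refine ⟨_, hmP, hmt, succOf_eq_of_forall_lt hmt fun w hwP hmw => not_le.1 fun hwt => ?_⟩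
  exact (le_max' _ _ (mem_filter.2 ⟨hwP, hwt⟩)).not_gt hmw

lemma image_succOf_filter_le (hP : ↑P ⊆ Icc 0 T) (h0 : (0 : ℝ) ∈ P) (ht : 0 ≤ t) :
    (P.filter (· ≤ t)).image (succOf T P) = insert (succOf T P t) ((P.filter (· ≤ t)).erase 0) := by
  ext u
  simp only [Finset.mem_image, Finset.mem_insert, Finset.mem_erase, Finset.mem_filter]
  constructor
  · rintro ⟨s, ⟨hsP, hst⟩, rfl⟩
    by_cases h : ∀ u ∈ P, s < u → t < u
    · exact Or.inl (succOf_eq_of_forall_lt hst h)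
    push Not at h
    obtain ⟨w, hwP, hsw, hwt⟩ := h
    obtain ⟨hmem, hlt⟩ := succOf_mem_and_lt (T := T) hwP hsw
    exact Or.inr ⟨((hP hsP).1.trans_lt hlt).ne', hmem, (succOf_le_of_lt hwP hsw).trans hwt⟩
  · rintro (rfl | ⟨hu0, huP, hut⟩)
    · obtain ⟨m, hmP, hmt, hm⟩ := exists_mem_le_succOf_eq (T := T) h0 ht
      exact ⟨m, ⟨hmP, hmt⟩, hm⟩
    · obtain ⟨p, hpP, hpu, rfl⟩ := exists_succOf_eq (T := T) h0 huP ((hP huP).1.lt_of_ne' hu0)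
      exact ⟨p, ⟨hpP, hpu.le.trans hut⟩, rfl⟩

lemma sum_filter_le_succOf_sub (hP : ↑P ⊆ Icc 0 T) (h0 : (0 : ℝ) ∈ P) (hTP : T ∈ P)
    (ht : 0 ≤ t) (htT : t < T) (g : ℝ → ℝ) :
    ∑ s ∈ P.filter (· ≤ t), (g (succOf T P s) - g s) = g (succOf T P t) - g 0 := by
  have hinj : Set.InjOn (succOf T P) ↑(P.filter (· ≤ t)) := by
    intro s₁ hs₁ s₂ hs₂ heq
    obtain ⟨hs₁P, hs₁t⟩ := mem_filter.1 hs₁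
    obtain ⟨hs₂P, hs₂t⟩ := mem_filter.1 hs₂
    rcases lt_trichotomy s₁ s₂ with hlt | heq' | hlt
    · exact absurd heq (succOf_lt_succOf hTP hs₂P (hs₂t.trans_lt htT) hlt).ne
    · exact heq'
    · exact absurd heq (succOf_lt_succOf hTP hs₁P (hs₁t.trans_lt htT) hlt).ne'
  have hnotin : succOf T P t ∉ (P.filter (· ≤ t)).erase 0 := fun h =>
    (mem_filter.1 (mem_of_mem_erase h)).2.not_gt (succOf_mem_and_lt hTP htT).2
  rw [sum_sub_distrib, ← sum_image hinj, image_succOf_filter_le hP h0 ht, sum_insert hnotin,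
    ← sum_erase_add _ _ (mem_filter.2 ⟨h0, ht⟩)]
  ring

lemma sum_filter_le_integral_succOf (hP : ↑P ⊆ Icc 0 T) (h0 : (0 : ℝ) ∈ P) (hTP : T ∈ P)
    (ht : 0 ≤ t) (htT : t < T) {g : ℝ → ℝ}
    (hg : ∀ ρ ∈ Icc 0 (succOf T P t), IntervalIntegrable g volume 0 ρ) :
    ∑ s ∈ P.filter (· ≤ t), ∫ u in s..succOf T P s, g u = ∫ u in 0..succOf T P t, g u := by
  have htel : ∑ s ∈ P.filter (· ≤ t), ((∫ u in 0..succOf T P s, g u) - ∫ u in 0..s, g u) =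
      (∫ u in 0..succOf T P t, g u) - ∫ u in 0..0, g u :=
    sum_filter_le_succOf_sub hP h0 hTP ht htT fun ρ => ∫ u in 0..ρ, g u
  rw [intervalIntegral.integral_same, sub_zero] at htel
  rw [← htel]
  refine sum_congr rfl fun s hs => ?_
  obtain ⟨hsP, hst⟩ := mem_filter.1 hs
  have hs0 := (hP hsP).1
  have hss' := le_succOf hP hsP
  exact (intervalIntegral.integral_interval_sub_left
    (hg _ ⟨hs0.trans hss', succOf_mono hP hst⟩)
    (hg _ ⟨hs0, hss'.trans (succOf_mono hP hst)⟩)).symm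

end Partition

namespace PartitionSeq

variable {T : ℝ} (𝕋 : PartitionSeq T)

lemma eventually_succOf_sub_lt {ε : ℝ} (hε : 0 < ε) :
    ∀ᶠ n in atTop, ∀ s ∈ 𝕋.part n, succOf T (𝕋.part n) s - s < ε := by
  obtain ⟨N, hN⟩ := 𝕋.mesh_to_zero ε hε
  exact eventually_atTop.2 ⟨N, hN⟩

lemma tendsto_succOf {t : ℝ} (ht : 0 ≤ t) (htT : t < T) :
    Tendsto (fun n => succOf T (𝕋.part n) t) atTop (𝓝[Ioc t T] t) := by
  have hgt : ∀ n, t < succOf T (𝕋.part n) t := fun n => (succOf_mem_and_lt (𝕋.top_mem n) htT).2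
  refine tendsto_nhdsWithin_iff.2 ⟨tendsto_order.2 ⟨fun a ha => Eventually.of_forall fun n =>
    ha.trans (hgt n), fun b hb => ?_⟩, Eventually.of_forall fun n =>
      ⟨hgt n, succOf_le (𝕋.subset_Icc n) t⟩⟩
  filter_upwards [𝕋.eventually_succOf_sub_lt (sub_pos.2 hb)] with n hn
  obtain ⟨m, hmP, hmt, hm⟩ := exists_mem_le_succOf_eq (T := T) (𝕋.zero_mem n) ht
  linarith [hn m hmP]

lemma sum_filter_le_integral_succOf (hP : ↑P ⊆ Icc 0 T) (h0 : (0 : ℝ) ∈ P) (hTP : T ∈ P)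
    (ht : 0 ≤ t) (htT : t < T) {g : ℝ → ℝ}
    (hg : ∀ ρ ∈ Icc 0 (succOf T P t), IntervalIntegrable g volume 0 ρ) :
    ∑ s ∈ P.filter (· ≤ t), ∫ u in s..succOf T P s, g u = ∫ u in 0..succOf T P t, g u := by
  have htel : ∑ s ∈ P.filter (· ≤ t), ((∫ u in 0..succOf T P s, g u) - ∫ u in 0..s, g u) =
      (∫ u in 0..succOf T P t, g u) - ∫ u in 0..0, g u :=
    sum_filter_le_succOf_sub hP h0 hTP ht htT fun ρ => ∫ u in 0..ρ, g u
  rw [intervalIntegral.integral_same, sub_zero] at htel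
  rw [← htel]
  refine sum_congr rfl fun s hs => ?_
  obtain ⟨hsP, hst⟩ := mem_filter.1 hs
  have hs0 := (hP hsP).1
  have hss' := le_succOf hP hsP
  exact (intervalIntegral.integral_interval_sub_left
    (hg _ ⟨hs0.trans hss', succOf_mono hP hst⟩)
    (hg _ ⟨hs0, hss'.trans (succOf_mono hP hst)⟩)).symm

end PartitionSeq

lemma tendsto_of_forall_eventually_abs_sub_le {ι : Type*} {l : Filter ι} {X : ι → ℝ} {L C : ℝ}
    (h : ∀ ε > 0, ∀ᶠ n in l, |X n - L| ≤ C * ε) : Tendsto X l (𝓝 L) := by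
  refine Metric.tendsto_nhds.2 fun ε hε => ?_
  have hC : 0 < |C| + 1 := by positivity
  filter_upwards [h (ε / (|C| + 1)) (div_pos hε hC)] with n hn
  rw [Real.dist_eq]
  calc |X n - L| ≤ C * (ε / (|C| + 1)) := hn
    _ ≤ |C| * (ε / (|C| + 1)) := by gcongr; exact le_abs_self C
    _ < ε := by
      rw [← mul_div_assoc, div_lt_iff₀ hC]
      nlinarith

section RiemannStieltjes

lemma sum_filter_le_eq_add_sum_filter_Ioc (P : Finset ℝ) (F : ℝ → ℝ) {a b : ℝ} (hab : a ≤ b) :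
    ∑ s ∈ P.filter (· ≤ b), F s =
      ∑ s ∈ P.filter (· ≤ a), F s + ∑ s ∈ P.filter (fun s => a < s ∧ s ≤ b), F s := by
  rw [← sum_filter_add_sum_filter_not (P.filter (· ≤ b)) (· ≤ a), filter_filter, filter_filter]
  congr 2
  · exact filter_congr fun s _ => ⟨fun h => h.2, fun h => ⟨h.trans hab, h⟩⟩
  · exact filter_congr fun s _ => ⟨fun h => ⟨not_le.1 h.2, h.1⟩, fun h => ⟨h.2, not_le.2 h.1⟩⟩

lemma sum_filter_le_eq_add_sum_range (P : Finset ℝ) (F : ℝ → ℝ) {r : ℕ → ℝ} (hr : Monotone r)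
    (M : ℕ) :
    ∑ s ∈ P.filter (· ≤ r M), F s = ∑ s ∈ P.filter (· ≤ r 0), F s +
      ∑ k ∈ range M, ∑ s ∈ P.filter (fun s => r k < s ∧ s ≤ r (k + 1)), F s := by
  induction M with
  | zero => simp
  | succ M ih =>
    rw [sum_filter_le_eq_add_sum_filter_Ioc P F (hr M.le_succ), ih, sum_range_succ, add_assoc]

def stieltjesSum (g : ℝ → ℝ) (r : ℕ → ℝ) (M : ℕ) (G : ℝ → ℝ) : ℝ :=
  g (r 0) * G (r 0) + ∑ k ∈ range M, g (r (k + 1)) * (G (r (k + 1)) - G (r k))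

variable {g : ℝ → ℝ} {r : ℕ → ℝ} {M : ℕ} {ε : ℝ}

lemma abs_sum_mul_sub_stieltjesSum_le {P : Finset ℝ} {c : ℝ → ℝ} (hr : Monotone r)
    (hP : ∀ s ∈ P, r 0 ≤ s) (hc : ∀ s ∈ P, 0 ≤ c s) (hε : 0 ≤ ε)
    (hosc : ∀ k < M, ∀ s ∈ Icc (r k) (r (k + 1)), |g s - g (r (k + 1))| ≤ ε) :
    |(∑ s ∈ P.filter (· ≤ r M), g s * c s)
        - stieltjesSum g r M (fun ρ => ∑ s ∈ P.filter (· ≤ ρ), c s)|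
      ≤ ε * ∑ s ∈ P.filter (· ≤ r M), c s := by
  have hinit : ∑ s ∈ P.filter (· ≤ r 0), g s * c s = g (r 0) * ∑ s ∈ P.filter (· ≤ r 0), c s := by
    rw [mul_sum]
    refine sum_congr rfl fun s hs => ?_
    obtain ⟨hsP, hs0⟩ := mem_filter.1 hs
    rw [le_antisymm hs0 (hP s hsP)]
  have hdiff : ∀ k, (∑ s ∈ P.filter (· ≤ r (k + 1)), c s) - ∑ s ∈ P.filter (· ≤ r k), c s =
      ∑ s ∈ P.filter (fun s => r k < s ∧ s ≤ r (k + 1)), c s := fun k => by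
    rw [sum_filter_le_eq_add_sum_filter_Ioc P c (hr k.le_succ)]
    ring
  have hkey : (∑ s ∈ P.filter (· ≤ r M), g s * c s)
      - stieltjesSum g r M (fun ρ => ∑ s ∈ P.filter (· ≤ ρ), c s) =
      ∑ k ∈ range M, ∑ s ∈ P.filter (fun s => r k < s ∧ s ≤ r (k + 1)),
        (g s - g (r (k + 1))) * c s := by
    simp only [stieltjesSum, hdiff, sum_filter_le_eq_add_sum_range P _ hr M, hinit, mul_sum,
      sub_mul, sum_sub_distrib]
    ring
  rw [hkey]
  calc _ ≤ ∑ k ∈ range M, ∑ s ∈ P.filter (fun s => r k < s ∧ s ≤ r (k + 1)), ε * c s := by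
        refine (abs_sum_le_sum_abs _ _).trans (sum_le_sum fun k hk => ?_)
        refine (abs_sum_le_sum_abs _ _).trans (sum_le_sum fun s hs => ?_)
        obtain ⟨hsP, hks, hsk⟩ := mem_filter.1 hs
        rw [abs_mul, abs_of_nonneg (hc s hsP)]
        exact mul_le_mul_of_nonneg_right (hosc k (mem_range.1 hk) s ⟨hks.le, hsk⟩) (hc s hsP)
    _ ≤ ε * ∑ s ∈ P.filter (· ≤ r 0), c s + ∑ k ∈ range M,
          ∑ s ∈ P.filter (fun s => r k < s ∧ s ≤ r (k + 1)), ε * c s :=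
        le_add_of_nonneg_left (mul_nonneg hε (sum_nonneg fun s hs => hc s (mem_filter.1 hs).1))
    _ = ε * ∑ s ∈ P.filter (· ≤ r M), c s := by
        rw [sum_filter_le_eq_add_sum_range P _ hr M, mul_add, mul_sum]
        simp only [mul_sum]

lemma abs_integral_mul_sub_stieltjesSum_le {α : ℝ → ℝ} (hr : Monotone r)
    (hα : ContinuousOn α (Icc (r 0) (r M))) (hg : ContinuousOn g (Icc (r 0) (r M)))
    (hosc : ∀ k < M, ∀ s ∈ Icc (r k) (r (k + 1)), |g s - g (r (k + 1))| ≤ ε) :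
    |(∫ u in r 0..r M, g u * α u) - stieltjesSum g r M (fun ρ => ∫ u in r 0..ρ, α u)|
      ≤ ε * ∫ u in r 0..r M, |α u| := by
  have hsub : ∀ k < M, Icc (r k) (r (k + 1)) ⊆ Icc (r 0) (r M) := fun k hk =>
    Icc_subset_Icc (hr (Nat.zero_le k)) (hr hk)
  have hint : ∀ {f : ℝ → ℝ}, ContinuousOn f (Icc (r 0) (r M)) →
      ∀ k < M, IntervalIntegrable f volume (r k) (r (k + 1)) := fun hf k hk =>
    (hf.mono ((uIcc_of_le (hr k.le_succ)).symm ▸ hsub k hk)).intervalIntegrable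
  have hsplit : ∀ {f : ℝ → ℝ}, ContinuousOn f (Icc (r 0) (r M)) →
      ∫ u in r 0..r M, f u = ∑ k ∈ range M, ∫ u in r k..r (k + 1), f u := fun hf =>
    (intervalIntegral.sum_integral_adjacent_intervals (hint hf)).symm
  have hgrid : stieltjesSum g r M (fun ρ => ∫ u in r 0..ρ, α u) =
      ∑ k ∈ range M, ∫ u in r k..r (k + 1), g (r (k + 1)) * α u := by
    have hI : ∀ k ≤ M, IntervalIntegrable α volume (r 0) (r k) := fun k hk =>
      (hα.mono ((uIcc_of_le (hr k.zero_le)).symm ▸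
        Icc_subset_Icc le_rfl (hr hk))).intervalIntegrable
    simp only [stieltjesSum, intervalIntegral.integral_same, mul_zero, zero_add]
    refine sum_congr rfl fun k hk => ?_
    rw [intervalIntegral.integral_interval_sub_left (hI (k + 1) (mem_range.1 hk))
      (hI k (mem_range.1 hk).le), intervalIntegral.integral_const_mul]
  have hsplit_gα : ∫ u in r 0..r M, g u * α u = _ := hsplit (hg.mul hα)
  have hsplit_α : ∫ u in r 0..r M, |α u| = _ := hsplit hα.abs
  rw [hsplit_gα, hsplit_α, hgrid, ← sum_sub_distrib, mul_sum]
  refine (abs_sum_le_sum_abs _ _).trans (sum_le_sum fun k hk => ?_)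
  have hk := mem_range.1 hk
  have hint_gα : IntervalIntegrable (fun u => g u * α u) volume (r k) (r (k + 1)) :=
    hint (hg.mul hα) k hk
  rw [← intervalIntegral.integral_sub hint_gα ((hint hα k hk).const_mul _),
    ← intervalIntegral.integral_const_mul ε (fun u => |α u|), ← Real.norm_eq_abs]
  refine intervalIntegral.norm_integral_le_of_norm_le (hr k.le_succ)
    (ae_of_all _ fun u hu => ?_) ((hint hα.abs k hk).const_mul ε)
  rw [Real.norm_eq_abs, ← sub_mul, abs_mul]
  exact mul_le_mul_of_nonneg_right (hosc k hk u (Ioc_subset_Icc_self hu)) (abs_nonneg _)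

lemma exists_grid_mesh_lt {t δ : ℝ} (ht : 0 ≤ t) (hδ : 0 < δ) :
    ∃ (M : ℕ) (r : ℕ → ℝ), Monotone r ∧ r 0 = 0 ∧ r M = t ∧ ∀ k, r (k + 1) - r k < δ := by
  obtain ⟨M, hM⟩ := exists_nat_gt (t / δ)
  have hM0 : (0 : ℝ) < M := (div_nonneg ht hδ.le).trans_lt hM
  refine ⟨M, fun k => k * (t / M), fun k l hkl =>
    mul_le_mul_of_nonneg_right (Nat.cast_le.2 hkl) (div_nonneg ht hM0.le), by simp,
    mul_div_cancel₀ t hM0.ne', fun k => ?_⟩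
  push_cast
  linarith [(div_lt_comm₀ hM0 hδ).2 hM]

lemma tendsto_stieltjesSum {G : ℕ → ℝ → ℝ} {G' : ℝ → ℝ}
    (h : ∀ k ≤ M, Tendsto (fun n => G n (r k)) atTop (𝓝 (G' (r k)))) :
    Tendsto (fun n => stieltjesSum g r M (G n)) atTop (𝓝 (stieltjesSum g r M G')) :=
  ((h 0 M.zero_le).const_mul _).add (tendsto_finsetSum _ fun k hk =>
    (((h (k + 1) (mem_range.1 hk)).sub (h k (mem_range.1 hk).le)).const_mul _))

/-- Pointwise convergence of the distribution functions of the measures `∑ₛ c n s • δₛ` to those of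
`α u du` implies weak convergence on `[0, t]`. -/
theorem tendsto_sum_mul_of_tendsto_cumsum {t : ℝ} (ht : 0 ≤ t) {P : ℕ → Finset ℝ}
    (hP : ∀ n, ∀ s ∈ P n, 0 ≤ s) {c : ℕ → ℝ → ℝ} (hc : ∀ n, ∀ s ∈ P n, 0 ≤ c n s)
    {α : ℝ → ℝ} (hα : ContinuousOn α (Icc 0 t))
    (hcum : ∀ ρ ∈ Icc 0 t, Tendsto (fun n => ∑ s ∈ (P n).filter (· ≤ ρ), c n s) atTop
      (𝓝 (∫ u in 0..ρ, α u)))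
    (hg : ContinuousOn g (Icc 0 t)) :
    Tendsto (fun n => ∑ s ∈ (P n).filter (· ≤ t), g s * c n s) atTop
      (𝓝 (∫ u in 0..t, g u * α u)) := by
  have hbdd : ∀ᶠ n in atTop, ∑ s ∈ (P n).filter (· ≤ t), c n s ≤ (∫ u in 0..t, α u) + 1 :=
    ((hcum t ⟨ht, le_rfl⟩).eventually (gt_mem_nhds (lt_add_one _))).mono fun _ h => h.le
  refine tendsto_of_forall_eventually_abs_sub_le
    (C := (∫ u in 0..t, α u) + 2 + ∫ u in 0..t, |α u|) fun ε hε => ?_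
  obtain ⟨δ, hδ, hgδ⟩ := Metric.uniformContinuousOn_iff.1
    (isCompact_Icc.uniformContinuousOn_of_continuous hg) ε hε
  -- compare both sides with Stieltjes sums of `g` on a grid of mesh `< δ`
  obtain ⟨M, r, hr, hr0, hrM, hstep⟩ := exists_grid_mesh_lt ht hδ
  have hrIcc : ∀ k ≤ M, r k ∈ Icc 0 t := fun k hk => ⟨hr0 ▸ hr k.zero_le, hrM ▸ hr hk⟩
  have hosc : ∀ k < M, ∀ s ∈ Icc (r k) (r (k + 1)), |g s - g (r (k + 1))| ≤ ε := by
    intro k hk s hs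
    have hdist : dist s (r (k + 1)) < δ := by
      rw [Real.dist_eq, abs_sub_lt_iff]
      constructor <;> linarith [hs.1, hs.2, hstep k, hr k.le_succ]
    exact (Real.dist_eq _ _ ▸ hgδ s ⟨(hrIcc k hk.le).1.trans hs.1, hs.2.trans (hrIcc _ hk).2⟩ _
      (hrIcc _ hk) hdist).le
  have hdisc : ∀ n, |(∑ s ∈ (P n).filter (· ≤ t), g s * c n s)
      - stieltjesSum g r M (fun ρ => ∑ s ∈ (P n).filter (· ≤ ρ), c n s)|
      ≤ ε * ∑ s ∈ (P n).filter (· ≤ t), c n s := fun n => by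
    simpa only [hrM] using
      abs_sum_mul_sub_stieltjesSum_le hr (hr0 ▸ hP n) (hc n) hε.le hosc
  have hcont : |(∫ u in 0..t, g u * α u) - stieltjesSum g r M (fun ρ => ∫ u in 0..ρ, α u)|
      ≤ ε * ∫ u in 0..t, |α u| := by
    have := abs_integral_mul_sub_stieltjesSum_le hr (hr0 ▸ hrM ▸ hα) (hr0 ▸ hrM ▸ hg) hosc
    rwa [hr0, hrM] at this
  have hgrid := tendsto_stieltjesSum (g := g) (r := r)
    (G := fun n ρ => ∑ s ∈ (P n).filter (· ≤ ρ), c n s)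
    (G' := fun ρ => ∫ u in 0..ρ, α u) fun k hk => hcum _ (hrIcc k hk)
  filter_upwards [hbdd, Metric.tendsto_nhds.1 hgrid ε hε] with n hn hYn
  rw [Real.dist_eq] at hYn
  have hB := mul_le_mul_of_nonneg_left hn hε.le
  have h1 := abs_sub_le (∑ s ∈ (P n).filter (· ≤ t), g s * c n s)
    (stieltjesSum g r M (fun ρ => ∑ s ∈ (P n).filter (· ≤ ρ), c n s))
    (stieltjesSum g r M (fun ρ => ∫ u in 0..ρ, α u))
  have h2 := abs_sub_le (∑ s ∈ (P n).filter (· ≤ t), g s * c n s)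
    (stieltjesSum g r M (fun ρ => ∫ u in 0..ρ, α u)) (∫ u in 0..t, g u * α u)
  rw [abs_sub_comm] at hcont
  linarith [hdisc n]

theorem tendsto_sum_mul_mul_of_tendsto_cumsum {t : ℝ} (ht : 0 ≤ t) {P : ℕ → Finset ℝ}
    (hP : ∀ n, ∀ s ∈ P n, 0 ≤ s) {e f : ℕ → ℝ → ℝ} {αee αff αef : ℝ → ℝ}
    (hαee : ContinuousOn αee (Icc 0 t)) (hαff : ContinuousOn αff (Icc 0 t))
    (hαef : ContinuousOn αef (Icc 0 t))
    (hee : ∀ ρ ∈ Icc 0 t, Tendsto (fun n => ∑ s ∈ (P n).filter (· ≤ ρ), e n s * e n s) atTop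
      (𝓝 (∫ u in 0..ρ, αee u)))
    (hff : ∀ ρ ∈ Icc 0 t, Tendsto (fun n => ∑ s ∈ (P n).filter (· ≤ ρ), f n s * f n s) atTop
      (𝓝 (∫ u in 0..ρ, αff u)))
    (hef : ∀ ρ ∈ Icc 0 t, Tendsto (fun n => ∑ s ∈ (P n).filter (· ≤ ρ), e n s * f n s) atTop
      (𝓝 (∫ u in 0..ρ, αef u)))
    (hg : ContinuousOn g (Icc 0 t)) :
    Tendsto (fun n => ∑ s ∈ (P n).filter (· ≤ t), g s * (e n s * f n s)) atTop
      (𝓝 (∫ u in 0..t, g u * αef u)) := by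
  have hint : ∀ {β : ℝ → ℝ}, ContinuousOn β (Icc 0 t) → ∀ ρ ∈ Icc 0 t,
      IntervalIntegrable β volume 0 ρ := fun hβ ρ hρ =>
    (hβ.mono ((uIcc_of_le hρ.1).symm ▸ Icc_subset_Icc le_rfl hρ.2)).intervalIntegrable
  have hαc : ∀ σ : ℝ, ContinuousOn (fun u => αee u + 2 * σ * αef u + σ ^ 2 * αff u) (Icc 0 t) :=
    fun σ => (hαee.add (hαef.const_smul (2 * σ))).add (hαff.const_smul (σ ^ 2))
  -- polarization: `4 e f = (e + f)² - (e - f)²`, and the squares are nonnegative weights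
  have hpolar : ∀ σ : ℝ, Tendsto (fun n => ∑ s ∈ (P n).filter (· ≤ t),
      g s * ((e n s + σ * f n s) * (e n s + σ * f n s))) atTop
      (𝓝 (∫ u in 0..t, g u * (αee u + 2 * σ * αef u + σ ^ 2 * αff u))) := by
    intro σ
    refine tendsto_sum_mul_of_tendsto_cumsum ht hP (fun n s _ => mul_self_nonneg _) (hαc σ)
      (fun ρ hρ => ?_) hg
    rw [intervalIntegral.integral_add ((hint hαee ρ hρ).add ((hint hαef ρ hρ).const_mul _))
      ((hint hαff ρ hρ).const_mul _), intervalIntegral.integral_add (hint hαee ρ hρ)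
      ((hint hαef ρ hρ).const_mul _), intervalIntegral.integral_const_mul,
      intervalIntegral.integral_const_mul]
    refine (((hee ρ hρ).add ((hef ρ hρ).const_mul (2 * σ))).add
      ((hff ρ hρ).const_mul (σ ^ 2))).congr fun n => ?_
    simp only [mul_sum, ← sum_add_distrib]
    exact sum_congr rfl fun s _ => by ring
  have hlim : ((∫ u in 0..t, g u * (αee u + 2 * 1 * αef u + 1 ^ 2 * αff u))
      - ∫ u in 0..t, g u * (αee u + 2 * (-1) * αef u + (-1) ^ 2 * αff u)) / 4
      = ∫ u in 0..t, g u * αef u := by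
    have hgαc : ∀ σ : ℝ, ContinuousOn
        (fun u => g u * (αee u + 2 * σ * αef u + σ ^ 2 * αff u)) (Icc 0 t) :=
      fun σ => hg.mul (hαc σ)
    rw [← intervalIntegral.integral_sub (hint (hgαc 1) t ⟨ht, le_rfl⟩)
      (hint (hgαc (-1)) t ⟨ht, le_rfl⟩), ← intervalIntegral.integral_div]
    exact intervalIntegral.integral_congr fun u _ => by ring
  rw [← hlim]
  refine (((hpolar 1).sub (hpolar (-1))).div_const 4).congr fun n => ?_
  rw [← sum_sub_distrib, sum_div]
  exact sum_congr rfl fun s _ => by ring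

end RiemannStieltjes

section Taylor

lemma abs_taylor_two_remainder_le {h h' h'' : ℝ → ℝ} {M : ℝ}
    (hd : ∀ r ∈ Icc (0 : ℝ) 1, HasDerivAt h (h' r) r)
    (hd' : ∀ r ∈ Icc (0 : ℝ) 1, HasDerivAt h' (h'' r) r)
    (hM : ∀ r ∈ Icc (0 : ℝ) 1, |h'' r - h'' 0| ≤ M) :
    |h 1 - h 0 - h' 0 - h'' 0 / 2| ≤ M := by
  have hunit : ∀ r ∈ Icc (0 : ℝ) 1, ‖r - 0‖ ≤ 1 := fun r hr => by
    rw [sub_zero, Real.norm_of_nonneg hr.1]; exact hr.2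
  have h0 : (0 : ℝ) ∈ Icc (0 : ℝ) 1 := left_mem_Icc.2 zero_le_one
  have hM0 : 0 ≤ M := (abs_nonneg _).trans (hM 0 h0)
  -- mean value inequality for `h' r - r h''(0)`, then for `h r - r h'(0) - r² h''(0) / 2`
  have hψ : ∀ r ∈ Icc (0 : ℝ) 1, |h' r - r * h'' 0 - h' 0| ≤ M := by
    intro r hr
    have := (convex_Icc (0 : ℝ) 1).norm_image_sub_le_of_norm_hasDerivWithin_le
      (f := fun r => h' r - r * h'' 0) (f' := fun r => h'' r - h'' 0)
      (fun r hr => ((hd' r hr).sub ((hasDerivAt_id r).mul_const _)).hasDerivWithinAt.congr_deriv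
        (by simp)) (fun r hr => (hM r hr).trans_eq' (Real.norm_eq_abs _)) h0 hr
    simp only [zero_mul, sub_zero, Real.norm_eq_abs] at this ⊢
    exact this.trans (by simpa using mul_le_of_le_one_right hM0 (hunit r hr))
  have := (convex_Icc (0 : ℝ) 1).norm_image_sub_le_of_norm_hasDerivWithin_le
    (f := fun r => h r - r * h' 0 - r ^ 2 * (h'' 0 / 2)) (f' := fun r => h' r - r * h'' 0 - h' 0)
    (fun r hr => (((hd r hr).sub ((hasDerivAt_id r).mul_const _)).sub
      ((hasDerivAt_pow 2 r).mul_const _)).hasDerivWithinAt.congr_deriv (by simp; ring))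
    (fun r hr => (hψ r hr).trans_eq' (Real.norm_eq_abs _)) h0 (right_mem_Icc.2 zero_le_one)
  calc |h 1 - h 0 - h' 0 - h'' 0 / 2|
      = ‖h 1 - 1 * h' 0 - 1 ^ 2 * (h'' 0 / 2) - (h 0 - 0 * h' 0 - 0 ^ 2 * (h'' 0 / 2))‖ := by
        rw [Real.norm_eq_abs]; congr 1; ring
    _ ≤ M := this.trans (mul_le_of_le_one_right hM0 (hunit 1 (right_mem_Icc.2 zero_le_one)))

variable {d : ℕ}

lemma fderiv_apply_eq_sum_pd1 (w : (Fin d → ℝ) → ℝ) (x u : Fin d → ℝ) :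
    fderiv ℝ w x u = ∑ k, u k * pd1 w k x := by
  conv_lhs => rw [← Finset.univ_sum_single u]
  rw [map_sum]
  refine sum_congr rfl fun k _ => ?_
  rw [pd1, ← smul_eq_mul, ← map_smul, ← Pi.single_smul, smul_eq_mul, mul_one]

lemma hasDerivAt_comp_add_smul {w : (Fin d → ℝ) → ℝ} {x u : Fin d → ℝ} {r : ℝ}
    (hw : DifferentiableAt ℝ w (x + r • u)) :
    HasDerivAt (fun ρ : ℝ => w (x + ρ • u)) (∑ k, u k * pd1 w k (x + r • u)) r := by
  rw [← fderiv_apply_eq_sum_pd1]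
  exact hw.hasFDerivAt.comp_hasDerivAt r
    (((hasDerivAt_id r).smul_const u).const_add x |>.congr_deriv (one_smul ℝ u))

def secondOrderRemainder (w : (Fin d → ℝ) → ℝ) (H : Fin d → Fin d → ℝ) (x y : Fin d → ℝ) : ℝ :=
  w y - w x - ∑ k, pd1 w k x * (y k - x k) - (1 / 2) * ∑ i, ∑ j, H i j * ((y i - x i) * (y j - x j))

lemma abs_secondOrderRemainder_le {D : Set (Fin d → ℝ)} {w : (Fin d → ℝ) → ℝ} {x y : Fin d → ℝ}
    {ε : ℝ} (hseg : ∀ r ∈ Icc (0 : ℝ) 1, x + r • (y - x) ∈ D)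
    (hw : ∀ z ∈ D, DifferentiableAt ℝ w z) (hw' : ∀ z ∈ D, ∀ j, DifferentiableAt ℝ (pd1 w j) z)
    (hosc : ∀ r ∈ Icc (0 : ℝ) 1, ∀ i j, |pd2 w i j (x + r • (y - x)) - pd2 w i j x| ≤ ε) :
    |secondOrderRemainder w (fun i j => pd2 w i j x) x y| ≤ ε * (∑ i, |y i - x i|) ^ 2 := by
  set u := y - x
  have hd : ∀ r ∈ Icc (0 : ℝ) 1,
      HasDerivAt (fun ρ => ∑ k, u k * pd1 w k (x + ρ • u))
        (∑ k, u k * ∑ i, u i * pd2 w i k (x + r • u)) r :=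
    fun r hr => HasDerivAt.fun_sum fun k _ =>
      (hasDerivAt_comp_add_smul (hw' _ (hseg r hr) k)).const_mul (u k)
  have hosc' : ∀ r ∈ Icc (0 : ℝ) 1, |∑ k, u k * ∑ i, u i * pd2 w i k (x + r • u)
      - ∑ k, u k * ∑ i, u i * pd2 w i k (x + (0 : ℝ) • u)| ≤ ε * (∑ i, |u i|) ^ 2 := by
    intro r hr
    calc _ = |∑ k, ∑ i, u k * u i * (pd2 w i k (x + r • u) - pd2 w i k x)| := by
          simp only [zero_smul, add_zero, ← sum_sub_distrib, mul_sum]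
          congr 1
          exact sum_congr rfl fun k _ => sum_congr rfl fun i _ => by ring
      _ ≤ ∑ k, ∑ i, |u k| * |u i| * ε := by
          refine (abs_sum_le_sum_abs _ _).trans (sum_le_sum fun k _ =>
            (abs_sum_le_sum_abs _ _).trans (sum_le_sum fun i _ => ?_))
          rw [abs_mul, abs_mul]
          exact mul_le_mul_of_nonneg_left (hosc r hr i k) (by positivity)
      _ = ε * (∑ i, |u i|) ^ 2 := by
          rw [sq, sum_mul_sum, mul_sum]
          exact sum_congr rfl fun k _ => by rw [mul_sum]; exact sum_congr rfl fun i _ => by ring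
  have key := abs_taylor_two_remainder_le
    (fun r hr => hasDerivAt_comp_add_smul (hw _ (hseg r hr))) hd hosc'
  have hfirst : ∑ k, u k * pd1 w k x = ∑ k, pd1 w k x * (y k - x k) :=
    sum_congr rfl fun k _ => by simp only [u, Pi.sub_apply]; ring
  have hsecond : ∑ k, u k * ∑ i, u i * pd2 w i k x =
      ∑ i, ∑ j, pd2 w i j x * ((y i - x i) * (y j - x j)) := by
    simp only [mul_sum]
    rw [sum_comm]
    exact sum_congr rfl fun i _ => sum_congr rfl fun j _ => by simp only [u, Pi.sub_apply]; ring
  simp only [zero_smul, add_zero, one_smul, u, add_sub_cancel] at key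
  rw [hfirst, hsecond] at key
  simpa only [secondOrderRemainder, Pi.sub_apply, div_eq_inv_mul, one_div, mul_one] using key

end Taylor

lemma abs_sub_sub_integral_le {f f' g : ℝ → ℝ} {a b ε : ℝ} (hab : a ≤ b)
    (hf : ContinuousOn f (Icc a b)) (hf' : ∀ u ∈ Ioo a b, HasDerivAt f (f' u) u)
    (hf'c : ContinuousOn f' (Icc a b)) (hg : ContinuousOn g (Icc a b))
    (h : ∀ u ∈ Icc a b, |f' u - g u| ≤ ε) :
    |f b - f a - ∫ u in a..b, g u| ≤ ε * (b - a) := by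
  rw [← intervalIntegral.integral_eq_sub_of_hasDerivAt_of_le hab hf hf'
    (hf'c.intervalIntegrable_of_Icc hab), ← intervalIntegral.integral_sub
    (hf'c.intervalIntegrable_of_Icc hab) (hg.intervalIntegrable_of_Icc hab), ← Real.norm_eq_abs]
  refine (intervalIntegral.norm_integral_le_of_norm_le_const fun u hu => ?_).trans_eq
    (by rw [abs_of_nonneg (sub_nonneg.2 hab)])
  rw [uIoc_of_le hab] at hu
  exact h u (Ioc_subset_Icc_self hu)

lemma hasFollmerIntegral_zero_iff {T : ℝ} (𝕋 : PartitionSeq T) {d : ℕ} (ξ S : ℝ → Fin d → ℝ)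
    (t I : ℝ) : HasFollmerIntegral T 𝕋 ξ S 0 t I ↔
      Tendsto (fun n => ∑ s ∈ (𝕋.part n).filter (· ≤ t),
        ∑ k, ξ s k * (S (succOf T (𝕋.part n) s) k - S s k)) atTop (𝓝 I) := by
  have hfilter : ∀ n, (𝕋.part n).filter (fun s => 0 ≤ s ∧ s ≤ t) = (𝕋.part n).filter (· ≤ t) :=
    fun n => filter_congr fun s hs => and_iff_right (𝕋.subset_Icc n hs).1
  simp only [HasFollmerIntegral, hfilter]

namespace IsC12

variable {d : ℕ} {I : Set ℝ} {D : Set (Fin d → ℝ)} {v : ℝ → (Fin d → ℝ) → ℝ} {u : ℝ}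
  {x : Fin d → ℝ}

lemma differentiableAt_time (hv : IsC12 I D v) (hu : u ∈ interior I) (hx : x ∈ D) :
    DifferentiableAt ℝ (fun τ => v τ x) u :=
  (hv.diff u hu x hx).comp (f := fun τ => (τ, x)) u
    (differentiableAt_id.prodMk (differentiableAt_const x))

lemma differentiableAt_space (hv : IsC12 I D v) (hu : u ∈ interior I) (hx : x ∈ D) :
    DifferentiableAt ℝ (v u) x :=
  (hv.diff u hu x hx).comp x ((differentiableAt_const u).prodMk differentiableAt_id)

end IsC12

section Ito

variable {T : ℝ} (𝕋 : PartitionSeq T) {d : ℕ} {D : Set (Fin d → ℝ)} {S : ℝ → Fin d → ℝ}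
  {v : ℝ → (Fin d → ℝ) → ℝ} {t : ℝ}

lemma abs_time_increment_sub_integral_le (hS : ContinuousOn S (Icc 0 T))
    (hSD : MapsTo S (Icc 0 T) D)
    (hv : ContinuousOn (fun q : ℝ × (Fin d → ℝ) => v q.1 q.2) (Icc 0 T ×ˢ D))
    {vt : ℝ × (Fin d → ℝ) → ℝ} (hvt : ContinuousOn vt (Ico 0 T ×ˢ D))
    (hvt' : ∀ u ∈ Ioo 0 T, ∀ x ∈ D, HasDerivAt (fun τ => v τ x) (vt (u, x)) u)
    {a b ε : ℝ} (ha : 0 ≤ a) (hab : a ≤ b) (hbT : b < T)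
    (hosc : ∀ u ∈ Icc a b, |vt (u, S b) - vt (u, S u)| ≤ ε) :
    |v b (S b) - v a (S b) - ∫ u in a..b, vt (u, S u)| ≤ ε * (b - a) := by
  have hsub : Icc a b ⊆ Ico 0 T := fun u hu => ⟨ha.trans hu.1, hu.2.trans_lt hbT⟩
  have hb : S b ∈ D := hSD ⟨ha.trans hab, hbT.le⟩
  exact abs_sub_sub_integral_le hab
    (hv.comp (continuousOn_id.prodMk continuousOn_const) fun u hu =>
      ⟨Ico_subset_Icc_self (hsub hu), hb⟩)
    (fun u hu => hvt' u ⟨ha.trans_lt hu.1, hu.2.trans hbT⟩ _ hb)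
    (hvt.comp (continuousOn_id.prodMk continuousOn_const) fun u hu => ⟨hsub hu, hb⟩)
    (hvt.comp (continuousOn_id.prodMk (hS.mono (hsub.trans Ico_subset_Icc_self))) fun u hu =>
      ⟨hsub hu, hSD (Ico_subset_Icc_self (hsub hu))⟩) hosc

theorem eventually_abs_sum_time_increments_sub_le (hS : ContinuousOn S (Icc 0 T))
    (hSD : MapsTo S (Icc 0 T) D)
    (hv : ContinuousOn (fun q : ℝ × (Fin d → ℝ) => v q.1 q.2) (Icc 0 T ×ˢ D))
    {vt : ℝ × (Fin d → ℝ) → ℝ} (hvt : ContinuousOn vt (Ico 0 T ×ˢ D))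
    (hvt' : ∀ u ∈ Ioo 0 T, ∀ x ∈ D, HasDerivAt (fun τ => v τ x) (vt (u, x)) u)
    (ht : t ∈ Ico 0 T) {ε : ℝ} (hε : 0 < ε) :
    ∀ᶠ n in atTop, |∑ s ∈ (𝕋.part n).filter (· ≤ t),
      (v (succOf T (𝕋.part n) s) (S (succOf T (𝕋.part n) s)) - v s (S (succOf T (𝕋.part n) s)))
      - ∫ u in 0..succOf T (𝕋.part n) t, vt (u, S u)| ≤ T * ε := by
  obtain ⟨ht0, htT⟩ := ht
  -- all cells `[s, s']` with `s ≤ t` eventually lie in `[0, t₁] ⊂ [0, T)`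
  obtain ⟨t₁, htt₁, ht₁T⟩ := exists_between htT
  have hIcc₁ : Icc 0 t₁ ⊆ Icc 0 T := Icc_subset_Icc le_rfl ht₁T.le
  have hF : ContinuousOn (fun p : ℝ × ℝ => vt (p.1, S p.2)) (Icc 0 t₁ ×ˢ Icc 0 T) :=
    hvt.comp (continuousOn_fst.prodMk (hS.comp continuousOn_snd fun p hp => hp.2))
      fun p hp => ⟨⟨hp.1.1, hp.1.2.trans_lt ht₁T⟩, hSD hp.2⟩
  have hint : ∀ ρ ∈ Icc 0 t₁, IntervalIntegrable (fun u => vt (u, S u)) volume 0 ρ := fun ρ hρ =>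
    ((hF.comp (continuousOn_id.prodMk continuousOn_id) fun u hu =>
      ⟨hu, hIcc₁ hu⟩).mono (Icc_subset_Icc le_rfl hρ.2)).intervalIntegrable_of_Icc hρ.1
  obtain ⟨δ, hδ, hFδ⟩ := Metric.uniformContinuousOn_iff.1
    ((isCompact_Icc.prod isCompact_Icc).uniformContinuousOn_of_continuous hF) ε hε
  filter_upwards [𝕋.eventually_succOf_sub_lt (lt_min hδ (sub_pos.2 htt₁))] with n hmesh
  set P := 𝕋.part n
  have hPIcc := 𝕋.subset_Icc n
  have hcell : ∀ s ∈ P.filter (· ≤ t), s ≤ succOf T P s ∧ succOf T P s ≤ t₁ := fun s hs =>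
    ⟨le_succOf hPIcc (mem_filter.1 hs).1, by
      linarith [hmesh s (mem_filter.1 hs).1, min_le_right δ (t₁ - t), (mem_filter.1 hs).2]⟩
  have hterm : ∀ s ∈ P.filter (· ≤ t), |v (succOf T P s) (S (succOf T P s))
      - v s (S (succOf T P s)) - ∫ u in s..succOf T P s, vt (u, S u)| ≤ ε * (succOf T P s - s) := by
    intro s hs
    have hs0 := (hPIcc (mem_filter.1 hs).1).1
    refine abs_time_increment_sub_integral_le hS hSD hv hvt hvt' hs0 (hcell s hs).1
      ((hcell s hs).2.trans_lt ht₁T) fun u hu => ?_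
    have hu₁ : u ∈ Icc 0 t₁ := ⟨hs0.trans hu.1, hu.2.trans (hcell s hs).2⟩
    have hdist : dist (u, succOf T P s) (u, u) < δ := by
      simp only [Prod.dist_eq, dist_self, Real.dist_eq]
      rw [abs_of_nonneg (sub_nonneg.2 hu.2), max_eq_right (sub_nonneg.2 hu.2)]
      linarith [hmesh s (mem_filter.1 hs).1, min_le_left δ (t₁ - t), hu.1]
    exact (Real.dist_eq _ _ ▸ hFδ _ ⟨hu₁, hs0.trans (hcell s hs).1, succOf_le hPIcc s⟩ _
      ⟨hu₁, hIcc₁ hu₁⟩ hdist).le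
  have hsplit : ∑ s ∈ P.filter (· ≤ t), ∫ u in s..succOf T P s, vt (u, S u) =
      ∫ u in 0..succOf T P t, vt (u, S u) := by
    obtain ⟨m, hmP, hmt, hm⟩ := exists_mem_le_succOf_eq (T := T) (𝕋.zero_mem n) ht0
    exact sum_filter_le_integral_succOf hPIcc (𝕋.zero_mem n) (𝕋.top_mem n) ht0 htT fun ρ hρ =>
      hint ρ ⟨hρ.1, hρ.2.trans (hm ▸ (hcell m (mem_filter.2 ⟨hmP, hmt⟩)).2)⟩
  have hlen : ∑ s ∈ P.filter (· ≤ t), (succOf T P s - s) = succOf T P t - 0 :=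
    sum_filter_le_succOf_sub hPIcc (𝕋.zero_mem n) (𝕋.top_mem n) ht0 htT fun s => s
  calc _ = |∑ s ∈ P.filter (· ≤ t), (v (succOf T P s) (S (succOf T P s))
          - v s (S (succOf T P s)) - ∫ u in s..succOf T P s, vt (u, S u))| := by
        rw [sum_sub_distrib _ (fun s => ∫ u in s..succOf T P s, vt (u, S u)), hsplit]
    _ ≤ ∑ s ∈ P.filter (· ≤ t), ε * (succOf T P s - s) :=
        (abs_sum_le_sum_abs _ _).trans (sum_le_sum hterm)
    _ ≤ T * ε := by
        rw [← mul_sum, hlen, sub_zero, mul_comm]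
        exact mul_le_mul_of_nonneg_right (succOf_le hPIcc t) hε.le

theorem tendsto_sum_time_increments (hS : ContinuousOn S (Icc 0 T)) (hSD : MapsTo S (Icc 0 T) D)
    (hv : ContinuousOn (fun q : ℝ × (Fin d → ℝ) => v q.1 q.2) (Icc 0 T ×ˢ D))
    {vt : ℝ × (Fin d → ℝ) → ℝ} (hvt : ContinuousOn vt (Ico 0 T ×ˢ D))
    (hvt' : ∀ u ∈ Ioo 0 T, ∀ x ∈ D, HasDerivAt (fun τ => v τ x) (vt (u, x)) u)
    (ht : t ∈ Ico 0 T) :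
    Tendsto (fun n => ∑ s ∈ (𝕋.part n).filter (· ≤ t),
      (v (succOf T (𝕋.part n) s) (S (succOf T (𝕋.part n) s)) - v s (S (succOf T (𝕋.part n) s))))
      atTop (𝓝 (∫ u in 0..t, vt (u, S u))) := by
  obtain ⟨ht0, htT⟩ := ht
  obtain ⟨t₁, htt₁, ht₁T⟩ := exists_between htT
  have hdiag : ContinuousOn (fun u => vt (u, S u)) (Icc 0 t₁) :=
    hvt.comp (continuousOn_id.prodMk (hS.mono (Icc_subset_Icc le_rfl ht₁T.le)))
      fun u hu => ⟨⟨hu.1, hu.2.trans_lt ht₁T⟩, hSD ⟨hu.1, hu.2.trans ht₁T.le⟩⟩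
  have hH : ContinuousOn (fun ρ => ∫ u in 0..ρ, vt (u, S u)) (Icc 0 t₁) := by
    have := intervalIntegral.continuousOn_primitive_interval (a := 0) (b := t₁) (μ := volume)
      ((uIcc_of_le (ht0.trans htt₁.le)).symm ▸ hdiag.integrableOn_Icc)
    rwa [uIcc_of_le (ht0.trans htt₁.le)] at this
  have hσ := 𝕋.tendsto_succOf ht0 htT
  have hσ₁ : ∀ᶠ n in atTop, succOf T (𝕋.part n) t ∈ Icc 0 t₁ := by
    filter_upwards [(hσ.mono_right nhdsWithin_le_nhds).eventually (gt_mem_nhds htt₁),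
      (tendsto_nhdsWithin_iff.1 hσ).2] with n h₁ h₂
    exact ⟨ht0.trans h₂.1.le, h₁.le⟩
  have hHσ := (hH t ⟨ht0, htt₁.le⟩).tendsto.comp
    (tendsto_nhdsWithin_iff.2 ⟨hσ.mono_right nhdsWithin_le_nhds, hσ₁⟩)
  have hlim := (tendsto_of_forall_eventually_abs_sub_le (L := 0) fun ε hε => by
    simpa only [sub_zero] using
      eventually_abs_sum_time_increments_sub_le 𝕋 hS hSD hv hvt hvt' ⟨ht0, htT⟩ hε).add hHσ
  rw [zero_add] at hlim
  exact hlim.congr fun n => sub_add_cancel _ _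

theorem tendsto_sum_secondOrder (hS : ContinuousOn S (Icc 0 T)) (hSD : MapsTo S (Icc 0 T) D)
    {vxx : Fin d → Fin d → ℝ × (Fin d → ℝ) → ℝ}
    (hvxx : ∀ i j, ContinuousOn (vxx i j) (Ico 0 T ×ˢ D))
    {α : Fin d → Fin d → ℝ → ℝ} (hα : ∀ i j, ContinuousOn (α i j) (Icc 0 T))
    (hcov : ∀ i j, ∀ r ∈ Icc 0 T,
      Tendsto (fun n => covSum T 𝕋 S i j r n) atTop (𝓝 (∫ u in 0..r, α i j u)))
    (ht : t ∈ Ico 0 T) :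
    Tendsto (fun n => ∑ s ∈ (𝕋.part n).filter (· ≤ t), (1 / 2) * ∑ i, ∑ j, vxx i j (s, S s) *
      ((S (succOf T (𝕋.part n) s) i - S s i) * (S (succOf T (𝕋.part n) s) j - S s j))) atTop
      (𝓝 (∫ u in 0..t, (1 / 2) * ∑ i, ∑ j, vxx i j (u, S u) * α i j u)) := by
  have hIcc : Icc 0 t ⊆ Icc 0 T := Icc_subset_Icc le_rfl ht.2.le
  have hg : ∀ i j, ContinuousOn (fun u => vxx i j (u, S u)) (Icc 0 t) := fun i j =>
    (hvxx i j).comp (continuousOn_id.prodMk (hS.mono hIcc))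
      fun u hu => ⟨⟨hu.1, hu.2.trans_lt ht.2⟩, hSD (hIcc hu)⟩
  have hij : ∀ i j, Tendsto (fun n => ∑ s ∈ (𝕋.part n).filter (· ≤ t), vxx i j (s, S s) *
      ((S (succOf T (𝕋.part n) s) i - S s i) * (S (succOf T (𝕋.part n) s) j - S s j))) atTop
      (𝓝 (∫ u in 0..t, vxx i j (u, S u) * α i j u)) := fun i j =>
    tendsto_sum_mul_mul_of_tendsto_cumsum ht.1 (fun n s hs => (𝕋.subset_Icc n hs).1)
      (e := fun n s => S (succOf T (𝕋.part n) s) i - S s i)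
      (f := fun n s => S (succOf T (𝕋.part n) s) j - S s j)
      ((hα i i).mono hIcc) ((hα j j).mono hIcc) ((hα i j).mono hIcc)
      (fun ρ hρ => hcov i i ρ (hIcc hρ)) (fun ρ hρ => hcov j j ρ (hIcc hρ))
      (fun ρ hρ => hcov i j ρ (hIcc hρ)) (hg i j)
  have hII : ∀ {f : ℝ → ℝ}, ContinuousOn f (Icc 0 t) → IntervalIntegrable f volume 0 t :=
    fun hf => hf.intervalIntegrable_of_Icc ht.1
  have hF : ∀ i j, ContinuousOn (fun u => vxx i j (u, S u) * α i j u) (Icc 0 t) := fun i j =>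
    (hg i j).mul ((hα i j).mono hIcc)
  rw [intervalIntegral.integral_const_mul, intervalIntegral.integral_finsetSum fun i _ =>
    hII (continuousOn_finsetSum _ fun j _ => hF i j)]
  simp only [intervalIntegral.integral_finsetSum fun j _ => hII (hF _ j)]
  refine ((tendsto_finsetSum _ fun i _ => tendsto_finsetSum _ fun j _ => hij i j).const_mul
    (1 / 2)).congr fun n => ?_
  rw [← mul_sum]
  exact congrArg _ ((sum_congr rfl fun i _ => sum_comm).trans sum_comm)

theorem tendsto_secondOrderRemainder_succOf_zero (hT : 0 < T)
    (hS : ContinuousWithinAt S (Icc 0 T) 0) {w : (Fin d → ℝ) → ℝ}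
    (hw : ContinuousWithinAt (fun u => w (S u)) (Icc 0 T) 0) (H : Fin d → Fin d → ℝ) :
    Tendsto (fun n => secondOrderRemainder w H (S 0) (S (succOf T (𝕋.part n) 0))) atTop (𝓝 0) := by
  have h0 : Tendsto (fun n => succOf T (𝕋.part n) 0) atTop (𝓝[Icc 0 T] 0) :=
    (𝕋.tendsto_succOf le_rfl hT).mono_right (nhdsWithin_mono _ Ioc_subset_Icc_self)
  have hΔ : ∀ k, Tendsto (fun n => S (succOf T (𝕋.part n) 0) k - S 0 k) atTop (𝓝 0) := fun k => by
    simpa using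
      ((continuous_apply k).continuousAt.tendsto.comp (hS.tendsto.comp h0)).sub_const (S 0 k)
  have := (((hw.tendsto.comp h0).sub_const (w (S 0))).sub (tendsto_finsetSum univ fun k _ =>
    (hΔ k).const_mul (pd1 w k (S 0)))).sub ((tendsto_finsetSum univ fun i _ =>
      tendsto_finsetSum univ fun j _ => ((hΔ i).mul (hΔ j)).const_mul (H i j)).const_mul
        (1 / 2 : ℝ))
  simpa [secondOrderRemainder] using this

theorem eventually_abs_secondOrderRemainder_le (hD : Convex ℝ D) (hS : ContinuousOn S (Icc 0 T))
    (hSD : MapsTo S (Icc 0 T) D) {vxx : Fin d → Fin d → ℝ × (Fin d → ℝ) → ℝ}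
    (hvxx : ∀ i j, ContinuousOn (vxx i j) (Ico 0 T ×ˢ D))
    (hvx : ∀ s ∈ Ioo 0 T, ∀ x ∈ D, DifferentiableAt ℝ (v s) x)
    (hvx' : ∀ s ∈ Ioo 0 T, ∀ x ∈ D, ∀ j, DifferentiableAt ℝ (pd1 (v s) j) x)
    (hvxx' : ∀ s ∈ Ioo 0 T, ∀ x ∈ D, ∀ i j, pd2 (v s) i j x = vxx i j (s, x))
    (htT : t < T) {ε : ℝ} (hε : 0 < ε) :
    ∀ᶠ n in atTop, ∀ s ∈ 𝕋.part n, 0 < s → s ≤ t →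
      |secondOrderRemainder (v s) (fun i j => vxx i j (s, S s)) (S s) (S (succOf T (𝕋.part n) s))|
        ≤ ε * (d * ∑ k, (S (succOf T (𝕋.part n) s) k - S s k) *
          (S (succOf T (𝕋.part n) s) k - S s k)) := by
  have hseg : ∀ {a b r : ℝ}, a ∈ Icc 0 T → b ∈ Icc 0 T → r ∈ Icc (0 : ℝ) 1 →
      S a + r • (S b - S a) ∈ D := fun ha hb hr => hD.add_smul_sub_mem (hSD ha) (hSD hb) hr
  have hIcc : Icc 0 t ⊆ Icc 0 T := Icc_subset_Icc le_rfl htT.le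
  -- uniform continuity of `(s, s', r) ↦ vxx (s, S s + r (S s' - S s))` controls the oscillation
  -- of the Hessian along the segment `[S s, S s']` by the mesh alone
  have hG : ContinuousOn (fun p : ℝ × ℝ × ℝ => fun i j =>
      vxx i j (p.1, S p.1 + p.2.2 • (S p.2.1 - S p.1))) (Icc 0 t ×ˢ Icc 0 T ×ˢ Icc (0 : ℝ) 1) :=
    continuousOn_pi.2 fun i => continuousOn_pi.2 fun j => (hvxx i j).comp
      (continuousOn_fst.prodMk (((hS.comp continuousOn_fst fun p hp => hIcc hp.1).add
        (continuousOn_snd.snd.smul ((hS.comp continuousOn_snd.fst fun p hp => hp.2.1).sub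
          (hS.comp continuousOn_fst fun p hp => hIcc hp.1)))))) fun p hp =>
      ⟨⟨hp.1.1, hp.1.2.trans_lt htT⟩, hseg (hIcc hp.1) hp.2.1 hp.2.2⟩
  obtain ⟨δ, hδ, hGδ⟩ := Metric.uniformContinuousOn_iff.1
    ((isCompact_Icc.prod (isCompact_Icc.prod isCompact_Icc)).uniformContinuousOn_of_continuous
      hG) ε hε
  filter_upwards [𝕋.eventually_succOf_sub_lt hδ] with n hmesh s hsP hs0 hst
  set s' := succOf T (𝕋.part n) s
  have hs : s ∈ Ioo 0 T := ⟨hs0, hst.trans_lt htT⟩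
  have hsIcc : s ∈ Icc 0 T := 𝕋.subset_Icc n hsP
  have hss' : s ≤ s' := le_succOf (𝕋.subset_Icc n) hsP
  have hs' : s' ∈ Icc 0 T := ⟨hsIcc.1.trans hss', succOf_le (𝕋.subset_Icc n) s⟩
  have hosc : ∀ r ∈ Icc (0 : ℝ) 1, ∀ i j,
      |pd2 (v s) i j (S s + r • (S s' - S s)) - pd2 (v s) i j (S s)| ≤ ε := by
    intro r hr i j
    rw [hvxx' s hs _ (hseg hsIcc hs' hr), hvxx' s hs _ (hSD hsIcc)]
    have hdist : dist (s, s', r) (s, s, r) < δ := by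
      simp only [Prod.dist_eq, dist_self, Real.dist_eq, abs_of_nonneg (sub_nonneg.2 hss'),
        max_eq_left (sub_nonneg.2 hss'), max_eq_right (sub_nonneg.2 hss')]
      exact hmesh s hsP
    have := hGδ (s, s', r) ⟨⟨hs0.le, hst⟩, hs', hr⟩ (s, s, r) ⟨⟨hs0.le, hst⟩, hsIcc, hr⟩ hdist
    simp only [sub_self, smul_zero, add_zero] at this
    exact (Real.dist_eq _ _ ▸ (dist_pi_lt_iff hε).1 ((dist_pi_lt_iff hε).1 this i) j).le
  have hH : (fun i j => vxx i j (s, S s)) = fun i j => pd2 (v s) i j (S s) := by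
    simp only [hvxx' s hs _ (hSD hsIcc)]
  rw [hH]
  refine (abs_secondOrderRemainder_le (fun r hr => hseg hsIcc hs' hr) (hvx s hs) (hvx' s hs)
    hosc).trans (mul_le_mul_of_nonneg_left ?_ hε.le)
  simpa [sq_abs, sq] using sq_sum_le_card_mul_sum_sq (s := univ) (f := fun i => |S s' i - S s i|)

theorem tendsto_sum_secondOrderRemainder (hD : Convex ℝ D) (hS : ContinuousOn S (Icc 0 T))
    (hSD : MapsTo S (Icc 0 T) D)
    (hv : ContinuousOn (fun q : ℝ × (Fin d → ℝ) => v q.1 q.2) (Icc 0 T ×ˢ D))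
    {vxx : Fin d → Fin d → ℝ × (Fin d → ℝ) → ℝ}
    (hvxx : ∀ i j, ContinuousOn (vxx i j) (Ico 0 T ×ˢ D))
    (hvx : ∀ s ∈ Ioo 0 T, ∀ x ∈ D, DifferentiableAt ℝ (v s) x)
    (hvx' : ∀ s ∈ Ioo 0 T, ∀ x ∈ D, ∀ j, DifferentiableAt ℝ (pd1 (v s) j) x)
    (hvxx' : ∀ s ∈ Ioo 0 T, ∀ x ∈ D, ∀ i j, pd2 (v s) i j x = vxx i j (s, x))
    (hqv : ∀ i, ∃ L, Tendsto (fun n => covSum T 𝕋 S i i t n) atTop (𝓝 L)) (ht : t ∈ Ico 0 T) :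
    Tendsto (fun n => ∑ s ∈ (𝕋.part n).filter (· ≤ t), secondOrderRemainder (v s)
      (fun i j => vxx i j (s, S s)) (S s) (S (succOf T (𝕋.part n) s))) atTop (𝓝 0) := by
  obtain ⟨ht0, htT⟩ := ht
  have hT : 0 < T := ht0.trans_lt htT
  set R : ℕ → ℝ → ℝ := fun n s => secondOrderRemainder (v s) (fun i j => vxx i j (s, S s)) (S s)
    (S (succOf T (𝕋.part n) s))
  -- `v 0` need not be differentiable, so the term at `s = 0` is controlled by continuity alone
  have hR0 : Tendsto (fun n => R n 0) atTop (𝓝 0) :=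
    tendsto_secondOrderRemainder_succOf_zero 𝕋 hT (hS 0 ⟨le_rfl, hT.le⟩)
      ((hv.comp (continuousOn_const.prodMk hS) fun u hu => ⟨⟨le_rfl, hT.le⟩, hSD hu⟩) 0
        ⟨le_rfl, hT.le⟩) _
  choose L hL using hqv
  have hbdd : ∀ᶠ n in atTop, ∑ k, covSum T 𝕋 S k k t n ≤ ∑ k, L k + 1 :=
    ((tendsto_finsetSum _ fun k _ => hL k).eventually (gt_mem_nhds (lt_add_one _))).mono
      fun _ h => h.le
  refine tendsto_of_forall_eventually_abs_sub_le (C := 1 + d * (∑ k, L k + 1)) fun ε hε => ?_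
  filter_upwards [Metric.tendsto_nhds.1 hR0 ε hε,
    eventually_abs_secondOrderRemainder_le 𝕋 hD hS hSD hvxx hvx hvx' hvxx' htT hε, hbdd]
    with n h0 hpos hqvn
  rw [Real.dist_eq, sub_zero] at h0
  have hqv_eq : ∑ s ∈ (𝕋.part n).filter (· ≤ t), ∑ k, (S (succOf T (𝕋.part n) s) k - S s k) *
      (S (succOf T (𝕋.part n) s) k - S s k) = ∑ k, covSum T 𝕋 S k k t n := sum_comm
  rw [sub_zero, ← add_sum_erase _ _ (mem_filter.2 ⟨𝕋.zero_mem n, ht0⟩)]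
  calc _ ≤ |R n 0| + ∑ s ∈ ((𝕋.part n).filter (· ≤ t)).erase 0, |R n s| :=
        (abs_add_le _ _).trans (add_le_add_right (abs_sum_le_sum_abs _ _) _)
    _ ≤ ε + ∑ s ∈ (𝕋.part n).filter (· ≤ t), ε * (d * ∑ k,
          (S (succOf T (𝕋.part n) s) k - S s k) * (S (succOf T (𝕋.part n) s) k - S s k)) := by
        refine add_le_add h0.le ((sum_le_sum fun s hs => ?_).trans
          (sum_le_sum_of_subset_of_nonneg (erase_subset _ _) fun s _ _ => ?_))
        · obtain ⟨hs0, hsQ⟩ := mem_erase.1 hs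
          obtain ⟨hsP, hst⟩ := mem_filter.1 hsQ
          exact hpos s hsP ((𝕋.subset_Icc n hsP).1.lt_of_ne' hs0) hst
        · exact mul_nonneg hε.le
            (mul_nonneg d.cast_nonneg (sum_nonneg fun k _ => mul_self_nonneg _))
    _ ≤ (1 + d * (∑ k, L k + 1)) * ε := by
        rw [← mul_sum, ← mul_sum, hqv_eq]
        nlinarith [mul_le_mul_of_nonneg_left hqvn (d.cast_nonneg : (0 : ℝ) ≤ d)]

theorem hasFollmerIntegral_of_isC12 (hD : Convex ℝ D) (hS : ContinuousOn S (Icc 0 T))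
    (hSD : MapsTo S (Icc 0 T) D)
    (hv : ContinuousOn (fun q : ℝ × (Fin d → ℝ) => v q.1 q.2) (Icc 0 T ×ˢ D))
    (hv12 : IsC12 (Ico 0 T) D v)
    {α : Fin d → Fin d → ℝ → ℝ} (hα : ∀ i j, ContinuousOn (α i j) (Icc 0 T))
    (hcov : ∀ i j, ∀ r ∈ Icc 0 T,
      Tendsto (fun n => covSum T 𝕋 S i j r n) atTop (𝓝 (∫ u in 0..r, α i j u)))
    (hpde : ∀ u ∈ Ioo 0 T,
      tderiv (Icc 0 T) v u (S u) + (1 / 2) * ∑ i, ∑ j, α i j u * pd2 (v u) i j (S u) = 0)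
    (ht : t ∈ Ico 0 T) :
    HasFollmerIntegral T 𝕋 (fun s k => pd1 (v s) k (S s)) S 0 t (v t (S t) - v 0 (S 0)) := by
  obtain ⟨vt, _, vxx, hvt, -, hvxx, hders⟩ := hv12.derivs_extend
  have hint : ∀ {u : ℝ}, u ∈ Ioo 0 T → u ∈ interior (Ico 0 T) := fun hu => by rwa [interior_Ico]
  have hvt' : ∀ u ∈ Ioo 0 T, ∀ x ∈ D, HasDerivAt (fun τ => v τ x) (vt (u, x)) u :=
    fun u hu x hx =>
      (hders u (hint hu) x hx).1 ▸ (hv12.differentiableAt_time (hint hu) hx).hasDerivAt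
  have hvxx' : ∀ s ∈ Ioo 0 T, ∀ x ∈ D, ∀ i j, pd2 (v s) i j x = vxx i j (s, x) :=
    fun s hs x hx i j => ((hders s (hint hs) x hx).2.2 i j).symm
  have htime := tendsto_sum_time_increments 𝕋 hS hSD hv hvt hvt' ht
  have hsecond := tendsto_sum_secondOrder 𝕋 hS hSD hvxx hα hcov ht
  have hrem := tendsto_sum_secondOrderRemainder 𝕋 hD hS hSD hv hvxx
    (fun s hs _ hx => hv12.differentiableAt_space (hint hs) hx)
    (fun s hs => hv12.diff2 s (hint hs)) hvxx' (fun i => ⟨_, hcov i i t ⟨ht.1, ht.2.le⟩⟩) ht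
  have htel : Tendsto (fun n => v (succOf T (𝕋.part n) t) (S (succOf T (𝕋.part n) t)) - v 0 (S 0))
      atTop (𝓝 (v t (S t) - v 0 (S 0))) :=
    (((hv.comp (continuousOn_id.prodMk hS) fun u hu => ⟨hu, hSD hu⟩) t ⟨ht.1, ht.2.le⟩).tendsto.comp
      ((𝕋.tendsto_succOf ht.1 ht.2).mono_right (nhdsWithin_mono _ fun u hu =>
        ⟨ht.1.trans hu.1.le, hu.2⟩))).sub_const _
  -- the PDE along the path makes the time and second-order limits cancel
  have hzero : (∫ u in 0..t, vt (u, S u))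
      + ∫ u in 0..t, (1 / 2) * ∑ i, ∑ j, vxx i j (u, S u) * α i j u = 0 := by
    suffices h : ∫ u in 0..t, vt (u, S u) =
        ∫ u in 0..t, -((1 / 2) * ∑ i, ∑ j, vxx i j (u, S u) * α i j u) by
      rw [h, intervalIntegral.integral_neg, neg_add_cancel]
    refine intervalIntegral.integral_congr_ae (ae_of_all _ fun u hu => ?_)
    rw [uIoc_of_le ht.1] at hu
    have hu' : u ∈ Ioo 0 T := ⟨hu.1, hu.2.trans_lt ht.2⟩
    have hSu := hSD ⟨hu'.1.le, hu'.2.le⟩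
    have h := hpde u hu'
    rw [tderiv, derivWithin_of_mem_nhds (Icc_mem_nhds hu'.1 hu'.2), ← (hders u (hint hu') _ hSu).1]
      at h
    simp only [hvxx' u hu' _ hSu] at h
    rw [eq_neg_iff_add_eq_zero, ← h]
    exact congrArg _ (congrArg _ (sum_congr rfl fun i _ => sum_congr rfl fun j _ => mul_comm _ _))
  rw [hasFollmerIntegral_zero_iff]
  have hlim := ((htel.sub htime).sub hsecond).sub hrem
  rw [sub_zero, sub_sub, hzero, sub_zero] at hlim
  refine hlim.congr fun n => ?_
  -- telescope `v(s', S s') - v(s, S s)` = time + first-order + second-order + remainder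
  rw [← sum_filter_le_succOf_sub (𝕋.subset_Icc n) (𝕋.zero_mem n) (𝕋.top_mem n) ht.1 ht.2
    (fun r => v r (S r))]
  simp only [← sum_sub_distrib, secondOrderRemainder]
  exact sum_congr rfl fun s _ => by ring

end Ito

lemma convex_posOrth {d : ℕ} : Convex ℝ (posOrth d) := fun _ hx _ hy _ _ ha hb hab i => by
  simp only [Pi.add_apply, Pi.smul_apply, smul_eq_mul]
  rcases ha.eq_or_lt with rfl | ha'
  · simp only [zero_add] at hab; simpa [hab] using hy i
  · exact add_pos_of_pos_of_nonneg (mul_pos ha' (hx i)) (mul_nonneg hb (hy i).le)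

theorem pathwise_hedging {T : ℝ} (𝕋 : PartitionSeq T) (hT : 0 < T) {d : ℕ} {D : Set (Fin d → ℝ)}
    (hD : Convex ℝ D) {S : ℝ → Fin d → ℝ} (hS : ContinuousOn S (Icc 0 T))
    (hSD : MapsTo S (Icc 0 T) D) {v : ℝ → (Fin d → ℝ) → ℝ}
    (hv : ContinuousOn (fun q : ℝ × (Fin d → ℝ) => v q.1 q.2) (Icc 0 T ×ˢ D))
    (hv12 : IsC12 (Ico 0 T) D v)
    {α : Fin d → Fin d → ℝ → ℝ} (hα : ∀ i j, ContinuousOn (α i j) (Icc 0 T))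
    (hcov : ∀ i j, ∀ r ∈ Icc 0 T,
      Tendsto (fun n => covSum T 𝕋 S i j r n) atTop (𝓝 (∫ u in 0..r, α i j u)))
    (hpde : ∀ u ∈ Ioo 0 T,
      tderiv (Icc 0 T) v u (S u) + (1 / 2) * ∑ i, ∑ j, α i j u * pd2 (v u) i j (S u) = 0)
    {f : (Fin d → ℝ) → ℝ} (hterm : v T (S T) = f (S T)) :
    (∀ t ∈ Ico 0 T,
      HasFollmerIntegral T 𝕋 (fun s k => pd1 (v s) k (S s)) S 0 t (v t (S t) - v 0 (S 0))) ∧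
    Tendsto (fun τ => v τ (S τ)) (𝓝[<] T) (𝓝 (f (S T))) := by
  refine ⟨fun t ht => hasFollmerIntegral_of_isC12 𝕋 hD hS hSD hv hv12 hα hcov hpde ht, ?_⟩
  rw [← hterm, ← nhdsWithin_Ico_eq_nhdsLT hT]
  exact ((hv.comp (continuousOn_id.prodMk hS) fun u hu => ⟨hu, hSD hu⟩) T
    ⟨hT.le, le_rfl⟩).tendsto.mono_left (nhdsWithin_mono T Ico_subset_Icc_self)

theorem stmt9_general (T : ℝ) (hT : 0 < T) (𝕋 : PartitionSeq T) (d : ℕ)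
    (a aP : ℝ → (Fin d → ℝ) → Fin d → Fin d → ℝ)
    (ha_cont : ∀ i j, ContinuousOn (fun p : ℝ × (Fin d → ℝ) => a p.1 p.2 i j)
      (Set.Icc 0 T ×ˢ (Set.univ : Set (Fin d → ℝ))))
    (haP_cont : ∀ i j, ContinuousOn (fun p : ℝ × (Fin d → ℝ) => aP p.1 p.2 i j)
      (Set.Icc 0 T ×ˢ posOrth d))
    -- `v` solves (TVP) with terminal condition `f`
    (f : (Fin d → ℝ) → ℝ)
    (v : ℝ → (Fin d → ℝ) → ℝ)
    (hv_cont : ContinuousOn (fun q : ℝ × (Fin d → ℝ) => v q.1 q.2)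
      (Set.Icc 0 T ×ˢ (Set.univ : Set (Fin d → ℝ))))
    (hv_C12 : IsC12 (Set.Ico 0 T) (Set.univ : Set (Fin d → ℝ)) v)
    (hv_pde : ∀ t ∈ Set.Ico (0 : ℝ) T, ∀ x : Fin d → ℝ,
      tderiv (Set.Icc 0 T) v t x + (1 / 2) * ∑ i, ∑ j, a t x i j * pd2 (v t) i j x = 0)
    (hv_term : ∀ x, v T x = f x)
    -- `vP` solves (TVP⁺) with terminal condition `fP`
    (fP : (Fin d → ℝ) → ℝ)
    (vP : ℝ → (Fin d → ℝ) → ℝ)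
    (hvP_cont : ContinuousOn (fun q : ℝ × (Fin d → ℝ) => vP q.1 q.2)
      (Set.Icc 0 T ×ˢ posOrth d))
    (hvP_C12 : IsC12 (Set.Ico 0 T) (posOrth d) vP)
    (hvP_pde : ∀ t ∈ Set.Ico (0 : ℝ) T, ∀ x ∈ posOrth d,
      tderiv (Set.Icc 0 T) vP t x
        + (1 / 2) * ∑ i, ∑ j, aP t x i j * x i * x j * pd2 (vP t) i j x = 0)
    (hvP_term : ∀ x ∈ posOrth d, vP T x = fP x) :
    (∀ S ∈ SclassA T 𝕋 a,
      (∀ t ∈ Set.Ico (0 : ℝ) T,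
        HasFollmerIntegral T 𝕋 (fun s k => pd1 (v s) k (S s)) S 0 t (v t (S t) - v 0 (S 0))) ∧
      Tendsto (fun τ => v τ (S τ)) (𝓝[<] T) (𝓝 (f (S T)))) ∧
    (∀ S ∈ SclassAPos T 𝕋 aP,
      (∀ t ∈ Set.Ico (0 : ℝ) T,
        HasFollmerIntegral T 𝕋 (fun s k => pd1 (vP s) k (S s)) S 0 t
          (vP t (S t) - vP 0 (S 0))) ∧
      Tendsto (fun τ => vP τ (S τ)) (𝓝[<] T) (𝓝 (fP (S T)))) := by
  refine ⟨fun S ⟨hS, hcov⟩ => pathwise_hedging 𝕋 hT convex_univ hS (mapsTo_univ _ _) hv_cont hv_C12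
    (fun i j => (ha_cont i j).comp (continuousOn_id.prodMk hS) fun u hu => ⟨hu, mem_univ _⟩) hcov
    (fun u hu => hv_pde u (Ioo_subset_Ico_self hu) (S u)) (hv_term _),
    fun S ⟨hS, hpos, hcov⟩ => ?_⟩
  have hSD : MapsTo S (Icc 0 T) (posOrth d) := fun u hu => hpos u hu
  exact pathwise_hedging 𝕋 hT convex_posOrth hS hSD hvP_cont hvP_C12
    (fun i j => (((haP_cont i j).comp (continuousOn_id.prodMk hS) fun u hu => ⟨hu, hSD hu⟩).mul
      ((continuous_apply i).comp_continuousOn hS)).mul ((continuous_apply j).comp_continuousOn hS))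
    hcov (fun u hu => hvP_pde u (Ioo_subset_Ico_self hu) (S u) (hSD ⟨hu.1.le, hu.2.le⟩))
    (hvP_term _ (hSD ⟨hT.le, le_rfl⟩))

/-- Strictly pathwise Delta hedging of `f(S(T))`: a solution `v` of (TVP) yields, for every
`S ∈ 𝒮_a`, a self-financing strategy `ξ(t) = ∇ₓv(t,S(t))` with portfolio value `v(t,S(t))`
replicating the payoff `f(S(T))`; analogously on `ℝ₊^d` with `ℒ⁺` and `𝒮_a^+`. -/
theorem stmt9 (T : ℝ) (hT : 0 < T) (𝕋 : PartitionSeq T) (d : ℕ)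
    (a aP : ℝ → (Fin d → ℝ) → Fin d → Fin d → ℝ)
    (ha_cont : ∀ i j, ContinuousOn (fun p : ℝ × (Fin d → ℝ) => a p.1 p.2 i j)
      (Set.Icc 0 T ×ˢ (Set.univ : Set (Fin d → ℝ))))
    (ha_symm : ∀ t ∈ Set.Icc (0 : ℝ) T, ∀ x : Fin d → ℝ, ∀ i j, a t x i j = a t x j i)
    (ha_pd : ∀ t ∈ Set.Icc (0 : ℝ) T, ∀ x : Fin d → ℝ, ∀ y : Fin d → ℝ, y ≠ 0 →
      0 < ∑ i, ∑ j, a t x i j * y i * y j)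
    (haP_cont : ∀ i j, ContinuousOn (fun p : ℝ × (Fin d → ℝ) => aP p.1 p.2 i j)
      (Set.Icc 0 T ×ˢ posOrth d))
    (haP_symm : ∀ t ∈ Set.Icc (0 : ℝ) T, ∀ x ∈ posOrth d, ∀ i j, aP t x i j = aP t x j i)
    (haP_pd : ∀ t ∈ Set.Icc (0 : ℝ) T, ∀ x ∈ posOrth d, ∀ y : Fin d → ℝ, y ≠ 0 →
      0 < ∑ i, ∑ j, aP t x i j * y i * y j)
    -- `v` solves (TVP) with terminal condition `f`
    (f : (Fin d → ℝ) → ℝ) (hf : Continuous f)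
    (v : ℝ → (Fin d → ℝ) → ℝ)
    (hv_cont : ContinuousOn (fun q : ℝ × (Fin d → ℝ) => v q.1 q.2)
      (Set.Icc 0 T ×ˢ (Set.univ : Set (Fin d → ℝ))))
    (hv_C12 : IsC12 (Set.Ico 0 T) (Set.univ : Set (Fin d → ℝ)) v)
    (hv_pde : ∀ t ∈ Set.Ico (0 : ℝ) T, ∀ x : Fin d → ℝ,
      tderiv (Set.Icc 0 T) v t x + (1 / 2) * ∑ i, ∑ j, a t x i j * pd2 (v t) i j x = 0)
    (hv_term : ∀ x, v T x = f x)
    -- `vP` solves (TVP⁺) with terminal condition `fP`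
    (fP : (Fin d → ℝ) → ℝ) (hfP : ContinuousOn fP (posOrth d))
    (vP : ℝ → (Fin d → ℝ) → ℝ)
    (hvP_cont : ContinuousOn (fun q : ℝ × (Fin d → ℝ) => vP q.1 q.2)
      (Set.Icc 0 T ×ˢ posOrth d))
    (hvP_C12 : IsC12 (Set.Ico 0 T) (posOrth d) vP)
    (hvP_pde : ∀ t ∈ Set.Ico (0 : ℝ) T, ∀ x ∈ posOrth d,
      tderiv (Set.Icc 0 T) vP t x
        + (1 / 2) * ∑ i, ∑ j, aP t x i j * x i * x j * pd2 (vP t) i j x = 0)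
    (hvP_term : ∀ x ∈ posOrth d, vP T x = fP x) :
    (∀ S ∈ SclassA T 𝕋 a,
      (∀ t ∈ Set.Ico (0 : ℝ) T,
        HasFollmerIntegral T 𝕋 (fun s k => pd1 (v s) k (S s)) S 0 t (v t (S t) - v 0 (S 0))) ∧
      Tendsto (fun τ => v τ (S τ)) (𝓝[<] T) (𝓝 (f (S T)))) ∧
    (∀ S ∈ SclassAPos T 𝕋 aP,
      (∀ t ∈ Set.Ico (0 : ℝ) T,
        HasFollmerIntegral T 𝕋 (fun s k => pd1 (vP s) k (S s)) S 0 t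
          (vP t (S t) - vP 0 (S 0))) ∧
      Tendsto (fun τ => vP τ (S τ)) (𝓝[<] T) (𝓝 (fP (S T)))) :=
  stmt9_general T hT 𝕋 d a aP ha_cont haP_cont f v hv_cont hv_C12 hv_pde hv_term fP vP hvP_cont
    hvP_C12 hvP_pde hvP_term
end
end
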